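/- arXiv:2511.07172 — 6 statements merged into one kernel-verified Lean document; each statement's English description precedes it below -/
import Mathlib

section
/- Let k be an algebraically closed field of characteristic zero and let p ∈ k[X,Y] be an irreducible polynomial with p ∉ k[X] and p ∉ k[Y]. Define the relation S on k by S(z,w) :↔ ∃ v ∈ k, p(z,v) = 0 ∧ p(w,v) = 0, and let S^m denote the m-fold relational composition of S with itself. If n ≥ 1 and S^n = S^{n+1} as relations on k, then every orbit of the orbit equivalence relation on Z(p) is a finite set whose cardinality is at most max(deg_X p, deg_Y p)^{2(n+1)}. -/
open MvPolynomial


/-- `relPow S m` is the `m`-fold relational composition `S ∘ ⋯ ∘ S` (`m` factors),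
where `(S ∘ T) a c ↔ ∃ b, T a b ∧ S b c`; by convention `relPow S 0` is equality. -/
def relPow {α : Type*} (S : α → α → Prop) : ℕ → (α → α → Prop)
  | 0 => Eq
  | m + 1 => fun a c => ∃ b, relPow S m a b ∧ S b c

namespace Stmt2Aux

variable {α : Type*}

theorem relPow_add {S : α → α → Prop} (m j : ℕ) (a c : α) :
    relPow S (m + j) a c ↔ ∃ b, relPow S m a b ∧ relPow S j b c := by
  induction j generalizing c with
  | zero =>
    constructor
    · intro h; exact ⟨c, h, rfl⟩
    · rintro ⟨b, hb, (h : b = c)⟩; subst h; exact hb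
  | succ j ih =>
    constructor
    · rintro ⟨b, hb, hbc⟩
      obtain ⟨d, hd, hdb⟩ := (ih b).mp hb
      exact ⟨d, hd, b, hdb, hbc⟩
    · rintro ⟨b, hb, d, hd, hdc⟩
      exact ⟨d, (ih d).mpr ⟨b, hb, hd⟩, hdc⟩

theorem relPow_refl {S : α → α → Prop} {a : α} (h : S a a) : ∀ m, relPow S m a a
  | 0 => rfl
  | m + 1 => ⟨a, relPow_refl h m, h⟩

theorem relPow_stab {S : α → α → Prop} {n : ℕ} (hper : relPow S n = relPow S (n + 1)) :
    ∀ j, relPow S (n + j) = relPow S n := by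
  intro j
  induction j with
  | zero => rfl
  | succ j ih =>
    have h1 : relPow S (n + (j + 1)) = fun a c => ∃ b, relPow S (n + j) a b ∧ S b c := rfl
    rw [h1]
    simp only [ih]
    exact hper.symm

theorem relPow_symm {S : α → α → Prop} (hsym : ∀ a b, S a b → S b a) :
    ∀ m (a b : α), relPow S m a b → relPow S m b a := by
  intro m
  induction m with
  | zero => intro a b h; exact h.symm
  | succ m ih =>
    rintro a c ⟨b, hab, hbc⟩
    have h1 : relPow S (1 + m) c a := by
      refine (relPow_add 1 m c a).mpr ⟨b, ⟨c, rfl, hsym b c hbc⟩, ih a b hab⟩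
    rwa [Nat.add_comm] at h1

theorem relPow_mono {S : α → α → Prop} {a : α} (hrefl : S a a) {m n : ℕ} (h : m ≤ n)
    (b : α) (hm : relPow S m a b) : relPow S n a b := by
  have h1 : relPow S (n - m + m) a b :=
    (relPow_add (n - m) m a b).mpr ⟨a, relPow_refl hrefl _, hm⟩
  rwa [Nat.sub_add_cancel h] at h1



theorem eq_C_of_isUnit {k : Type*} [Field k] {s : MvPolynomial (Fin 2) k} (hu : IsUnit s) :
    ∃ c : k, s = C c := by
  let e1 := MvPolynomial.finSuccEquiv k 1
  have h1 : IsUnit (e1 s) := hu.map e1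
  obtain ⟨r, hru, hr⟩ := Polynomial.isUnit_iff.mp h1
  let e2 := MvPolynomial.finSuccEquiv k 0
  have h2 : IsUnit (e2 r) := hru.map e2
  obtain ⟨r', hr'u, hr'⟩ := Polynomial.isUnit_iff.mp h2
  let e0 := MvPolynomial.isEmptyAlgEquiv k (Fin 0)
  refine ⟨e0 r', ?_⟩
  have h0 : r' = algebraMap k _ (e0 r') := by
    conv_lhs => rw [← e0.symm_apply_apply r']
    rw [show (e0 r' : k) = algebraMap k k (e0 r') from rfl, AlgEquiv.commutes]
    simp
  have hra : r = algebraMap k _ (e0 r') := by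
    have : e2 r = algebraMap k _ (e0 r') := by
      rw [← hr', Polynomial.algebraMap_apply, ← h0]
    calc r = e2.symm (e2 r) := (e2.symm_apply_apply r).symm
      _ = e2.symm (algebraMap k _ (e0 r')) := by rw [this]
      _ = algebraMap k _ (e0 r') := e2.symm.commutes _
  have hsa : e1 s = algebraMap k _ (e0 r') := by
    rw [← hr, Polynomial.algebraMap_apply, ← hra]
  calc s = e1.symm (e1 s) := (e1.symm_apply_apply s).symm
    _ = e1.symm (algebraMap k _ (e0 r')) := by rw [hsa]
    _ = algebraMap k _ (e0 r') := e1.symm.commutes _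
    _ = C (e0 r') := rfl



theorem evalEval {k : Type*} [CommSemiring k] (g : Fin 2 → Polynomial k) (v : k)
    (f : MvPolynomial (Fin 2) k) :
    Polynomial.eval v (MvPolynomial.aeval g f) = MvPolynomial.eval (fun i => (g i).eval v) f := by
  induction f using MvPolynomial.induction_on with
  | C a => simp
  | add f g hf hg => simp [hf, hg]
  | mul_X f i hf => simp [hf]

theorem sub_dvd_aeval_left {k R : Type*} [CommRing k] [CommRing R] [Algebra k R]
    (f : MvPolynomial (Fin 2) k) (x y z : R) :
    (x - y) ∣ (aeval ![x, z] f - aeval ![y, z] f) := by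
  induction f using MvPolynomial.induction_on with
  | C a => simp
  | add f g hf hg =>
    have h := dvd_add hf hg
    have he : aeval ![x, z] f - aeval ![y, z] f + (aeval ![x, z] g - aeval ![y, z] g)
        = aeval ![x, z] (f + g) - aeval ![y, z] (f + g) := by
      simp only [map_add]; ring
    rwa [he] at h
  | mul_X f i hf =>
    fin_cases i
    · simp only [map_mul, aeval_X, Fin.mk_zero, Matrix.cons_val_zero]
      have he : aeval ![x, z] f * x - aeval ![y, z] f * y
          = aeval ![x, z] f * (x - y) + (aeval ![x, z] f - aeval ![y, z] f) * y := by ring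
      rw [he]
      exact dvd_add (Dvd.intro_left _ rfl) (hf.mul_right y)
    · simp only [map_mul, aeval_X, Fin.mk_one, Matrix.cons_val_one, Matrix.head_cons, Matrix.cons_val_zero]
      have he : aeval ![x, z] f * z - aeval ![y, z] f * z
          = (aeval ![x, z] f - aeval ![y, z] f) * z := by ring
      rw [he]
      exact hf.mul_right z

theorem sub_dvd_aeval_right {k R : Type*} [CommRing k] [CommRing R] [Algebra k R]
    (f : MvPolynomial (Fin 2) k) (x y z : R) :
    (x - y) ∣ (aeval ![z, x] f - aeval ![z, y] f) := by
  induction f using MvPolynomial.induction_on with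
  | C a => simp
  | add f g hf hg =>
    have h := dvd_add hf hg
    have he : aeval ![z, x] f - aeval ![z, y] f + (aeval ![z, x] g - aeval ![z, y] g)
        = aeval ![z, x] (f + g) - aeval ![z, y] (f + g) := by
      simp only [map_add]; ring
    rwa [he] at h
  | mul_X f i hf =>
    fin_cases i
    · simp only [map_mul, aeval_X, Fin.mk_zero, Matrix.cons_val_zero]
      have he : aeval ![z, x] f * z - aeval ![z, y] f * z
          = (aeval ![z, x] f - aeval ![z, y] f) * z := by ring
      rw [he]
      exact hf.mul_right z
    · simp only [map_mul, aeval_X, Fin.mk_one, Matrix.cons_val_one, Matrix.head_cons, Matrix.cons_val_zero]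
      have he : aeval ![z, x] f * x - aeval ![z, y] f * y
          = aeval ![z, x] f * (x - y) + (aeval ![z, x] f - aeval ![z, y] f) * y := by ring
      rw [he]
      exact dvd_add (Dvd.intro_left _ rfl) (hf.mul_right y)






theorem aeval_id (k : Type*) [CommSemiring k] (f : MvPolynomial (Fin 2) k) :
    aeval ![(X 0 : MvPolynomial (Fin 2) k), X 1] f = f := by
  have h : ![(X 0 : MvPolynomial (Fin 2) k), X 1] = X := by
    funext i; fin_cases i <;> rfl
  rw [h, aeval_X_left_apply]

theorem spec_left_ne_zero {k : Type*} [Field k] (p : MvPolynomial (Fin 2) k)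
    (hirr : Irreducible p) (hX : p ∉ supported k ({0} : Set (Fin 2))) (a : k) :
    (aeval ![Polynomial.C a, Polynomial.X] p : Polynomial k) ≠ 0 := by
  intro h0
  have hcomp : (Polynomial.aeval (X 1 : MvPolynomial (Fin 2) k)).comp
      (aeval ![Polynomial.C a, Polynomial.X] : MvPolynomial (Fin 2) k →ₐ[k] Polynomial k)
      = aeval ![C a, X 1] := by
    apply MvPolynomial.algHom_ext; intro i; fin_cases i <;> simp
  have hr : (aeval ![C a, X 1] : MvPolynomial (Fin 2) k →ₐ[k] MvPolynomial (Fin 2) k) p = 0 := by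
    rw [← hcomp]
    simp [AlgHom.comp_apply, h0]
  have hdvd : (X 0 - C a : MvPolynomial (Fin 2) k) ∣ p := by
    have h2 := sub_dvd_aeval_left p (X 0 : MvPolynomial (Fin 2) k) (C a) (X 1)
    rwa [aeval_id, hr, sub_zero] at h2
  obtain ⟨s, hs⟩ := hdvd
  rcases hirr.isUnit_or_isUnit hs with hu | hu
  · have h3 := hu.map (eval (fun _ => a) : MvPolynomial (Fin 2) k →+* k)
    simp at h3
  · obtain ⟨c, rfl⟩ := eq_C_of_isUnit hu
    apply hX
    rw [hs]
    refine Subalgebra.mul_mem _ (Subalgebra.sub_mem _ ?_ ?_) ?_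
    · exact (X_mem_supported).mpr rfl
    · exact Subalgebra.algebraMap_mem _ a
    · exact Subalgebra.algebraMap_mem _ c

theorem spec_right_ne_zero {k : Type*} [Field k] (p : MvPolynomial (Fin 2) k)
    (hirr : Irreducible p) (hY : p ∉ supported k ({1} : Set (Fin 2))) (b : k) :
    (aeval ![Polynomial.X, Polynomial.C b] p : Polynomial k) ≠ 0 := by
  intro h0
  have hcomp : (Polynomial.aeval (X 0 : MvPolynomial (Fin 2) k)).comp
      (aeval ![Polynomial.X, Polynomial.C b] : MvPolynomial (Fin 2) k →ₐ[k] Polynomial k)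
      = aeval ![X 0, C b] := by
    apply MvPolynomial.algHom_ext; intro i; fin_cases i <;> simp
  have hr : (aeval ![X 0, C b] : MvPolynomial (Fin 2) k →ₐ[k] MvPolynomial (Fin 2) k) p = 0 := by
    rw [← hcomp]
    simp [AlgHom.comp_apply, h0]
  have hdvd : (X 1 - C b : MvPolynomial (Fin 2) k) ∣ p := by
    have h2 := sub_dvd_aeval_right p (X 1 : MvPolynomial (Fin 2) k) (C b) (X 0)
    rwa [aeval_id, hr, sub_zero] at h2
  obtain ⟨s, hs⟩ := hdvd
  rcases hirr.isUnit_or_isUnit hs with hu | hu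
  · have h3 := hu.map (eval (fun _ => b) : MvPolynomial (Fin 2) k →+* k)
    simp at h3
  · obtain ⟨c, rfl⟩ := eq_C_of_isUnit hu
    apply hY
    rw [hs]
    refine Subalgebra.mul_mem _ (Subalgebra.sub_mem _ ?_ ?_) ?_
    · exact (X_mem_supported).mpr rfl
    · exact Subalgebra.algebraMap_mem _ b
    · exact Subalgebra.algebraMap_mem _ c



theorem natDegree_aeval_left {k : Type*} [Field k] (p : MvPolynomial (Fin 2) k) (a : k) :
    (aeval ![Polynomial.C a, Polynomial.X] p : Polynomial k).natDegree ≤ p.degreeOf 1 := by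
  conv_lhs => rw [p.as_sum]
  rw [map_sum]
  apply Polynomial.natDegree_sum_le_of_forall_le
  intro m hm
  refine le_trans ?_ (monomial_le_degreeOf 1 hm)
  rw [aeval_monomial, Finsupp.prod_pow, Fin.prod_univ_two]
  simp only [Matrix.cons_val_zero, Matrix.cons_val_one, Matrix.head_cons]
  refine Polynomial.natDegree_mul_le.trans ?_
  refine le_trans (add_le_add (le_of_eq (Polynomial.natDegree_C _))
    Polynomial.natDegree_mul_le) ?_
  rw [Polynomial.natDegree_pow, Polynomial.natDegree_pow, Polynomial.natDegree_C, Polynomial.natDegree_X]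
  omega

theorem natDegree_aeval_right {k : Type*} [Field k] (p : MvPolynomial (Fin 2) k) (b : k) :
    (aeval ![Polynomial.X, Polynomial.C b] p : Polynomial k).natDegree ≤ p.degreeOf 0 := by
  conv_lhs => rw [p.as_sum]
  rw [map_sum]
  apply Polynomial.natDegree_sum_le_of_forall_le
  intro m hm
  refine le_trans ?_ (monomial_le_degreeOf 0 hm)
  rw [aeval_monomial, Finsupp.prod_pow, Fin.prod_univ_two]
  simp only [Matrix.cons_val_zero, Matrix.cons_val_one, Matrix.head_cons]
  refine Polynomial.natDegree_mul_le.trans ?_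
  refine le_trans (add_le_add (le_of_eq (Polynomial.natDegree_C _))
    Polynomial.natDegree_mul_le) ?_
  rw [Polynomial.natDegree_pow, Polynomial.natDegree_pow, Polynomial.natDegree_C, Polynomial.natDegree_X]
  omega


end Stmt2Aux

open Stmt2Aux in
theorem stmt_2 {k : Type*} [Field k] [IsAlgClosed k] [CharZero k]
    (p : MvPolynomial (Fin 2) k) (hirr : Irreducible p)
    (hX : p ∉ supported k ({0} : Set (Fin 2)))
    (hY : p ∉ supported k ({1} : Set (Fin 2)))
    (S : k → k → Prop)
    (hS : ∀ z w, S z w ↔ ∃ v, eval ![z, v] p = 0 ∧ eval ![w, v] p = 0)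
    (n : ℕ) (hn : 1 ≤ n)
    (hper : relPow S n = relPow S (n + 1)) :
    ∀ z : {z : k × k // eval ![z.1, z.2] p = 0},
      {w | Relation.EqvGen
          (fun u v => u.1.1 = v.1.1 ∨ u.1.2 = v.1.2) z w}.Finite ∧
      {w | Relation.EqvGen
          (fun u v => u.1.1 = v.1.1 ∨ u.1.2 = v.1.2) z w}.ncard ≤
        (max (p.degreeOf 0) (p.degreeOf 1)) ^ (2 * (n + 1)) := by
  classical
  intro z
  have hqa : ∀ a : k, (aeval ![Polynomial.C a, Polynomial.X] p : Polynomial k) ≠ 0 :=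
    spec_left_ne_zero p hirr hX
  have hqb : ∀ b : k, (aeval ![Polynomial.X, Polynomial.C b] p : Polynomial k) ≠ 0 :=
    spec_right_ne_zero p hirr hY
  set rset : k → Finset k :=
    fun a => (aeval ![Polynomial.C a, Polynomial.X] p : Polynomial k).roots.toFinset with hrset
  set cset : k → Finset k :=
    fun b => (aeval ![Polynomial.X, Polynomial.C b] p : Polynomial k).roots.toFinset with hcset
  have hrmem : ∀ a v : k, eval ![a, v] p = 0 → v ∈ rset a := by
    intro a v h
    refine Multiset.mem_toFinset.mpr (Polynomial.mem_roots'.mpr ⟨hqa a, ?_⟩)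
    show Polynomial.eval v _ = 0
    rw [evalEval]
    have he : (fun i => Polynomial.eval v (![Polynomial.C a, Polynomial.X] i)) = ![a, v] := by
      funext i; fin_cases i <;> simp
    rw [he]; exact h
  have hcmem : ∀ b w : k, eval ![w, b] p = 0 → w ∈ cset b := by
    intro b w h
    refine Multiset.mem_toFinset.mpr (Polynomial.mem_roots'.mpr ⟨hqb b, ?_⟩)
    show Polynomial.eval w _ = 0
    rw [evalEval]
    have he : (fun i => Polynomial.eval w (![Polynomial.X, Polynomial.C b] i)) = ![w, b] := by
      funext i; fin_cases i <;> simp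
    rw [he]; exact h
  have hrcard : ∀ a, (rset a).card ≤ p.degreeOf 1 := fun a =>
    (Multiset.toFinset_card_le _).trans ((Polynomial.card_roots' _).trans
      (natDegree_aeval_left p a))
  have hccard : ∀ b, (cset b).card ≤ p.degreeOf 0 := fun b =>
    (Multiset.toFinset_card_le _).trans ((Polynomial.card_roots' _).trans
      (natDegree_aeval_right p b))
  set Sstep : k → Finset k := fun z0 => (rset z0).biUnion cset with hSstepdef
  have hSstep : ∀ z0 w, S z0 w → w ∈ Sstep z0 := by
    intro z0 w hw
    obtain ⟨v, h1, h2⟩ := (hS z0 w).mp hw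
    exact Finset.mem_biUnion.mpr ⟨v, hrmem z0 v h1, hcmem v w h2⟩
  have hSstepcard : ∀ z0, (Sstep z0).card ≤ p.degreeOf 1 * p.degreeOf 0 := by
    intro z0
    refine Finset.card_biUnion_le.trans ?_
    calc ∑ v ∈ rset z0, (cset v).card ≤ (rset z0).card * p.degreeOf 0 := by
          simpa using Finset.sum_le_card_nsmul (rset z0) _ (p.degreeOf 0) (fun v _ => hccard v)
      _ ≤ p.degreeOf 1 * p.degreeOf 0 := Nat.mul_le_mul_right _ (hrcard z0)
  have hchain : ∀ m (z0 : k), ∃ s : Finset k,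
      (∀ w, relPow S m z0 w → w ∈ s) ∧ s.card ≤ (p.degreeOf 1 * p.degreeOf 0) ^ m := by
    intro m
    induction m with
    | zero =>
      intro z0
      exact ⟨{z0}, fun w h => Finset.mem_singleton.mpr (h : z0 = w).symm, by simp⟩
    | succ m ih =>
      intro z0
      obtain ⟨s, hs, hc⟩ := ih z0
      refine ⟨s.biUnion Sstep, ?_, ?_⟩
      · rintro w ⟨b, hb, hbw⟩
        exact Finset.mem_biUnion.mpr ⟨b, hs b hb, hSstep b w hbw⟩
      · refine Finset.card_biUnion_le.trans ?_
        calc ∑ b ∈ s, (Sstep b).card ≤ s.card * (p.degreeOf 1 * p.degreeOf 0) := by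
              simpa using Finset.sum_le_card_nsmul s _ _ (fun b _ => hSstepcard b)
          _ ≤ (p.degreeOf 1 * p.degreeOf 0) ^ m * (p.degreeOf 1 * p.degreeOf 0) :=
              Nat.mul_le_mul_right _ hc
          _ = (p.degreeOf 1 * p.degreeOf 0) ^ (m + 1) := (pow_succ _ _).symm
  have hsym : ∀ a b, S a b → S b a := by
    intro a b h
    obtain ⟨v, h1, h2⟩ := (hS a b).mp h
    exact (hS b a).mpr ⟨v, h2, h1⟩
  have hrefl : ∀ u : {z : k × k // eval ![z.1, z.2] p = 0}, S u.1.1 u.1.1 := by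
    intro u
    exact (hS _ _).mpr ⟨u.1.2, u.2, u.2⟩
  have hQequiv : Equivalence
      (fun (u w : {z : k × k // eval ![z.1, z.2] p = 0}) => relPow S n u.1.1 w.1.1) := by
    constructor
    · intro u; exact relPow_refl (hrefl u) n
    · intro u w h; exact relPow_symm hsym n _ _ h
    · intro u v w h1 h2
      have h3 : relPow S (n + n) u.1.1 w.1.1 := (relPow_add n n _ _).mpr ⟨_, h1, h2⟩
      rwa [relPow_stab hper n] at h3
  have hRQ : ∀ u w : {z : k × k // eval ![z.1, z.2] p = 0},
      (u.1.1 = w.1.1 ∨ u.1.2 = w.1.2) → relPow S n u.1.1 w.1.1 := by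
    intro u w h
    rcases h with h | h
    · rw [h]; exact relPow_refl (hrefl w) n
    · have hstep : S u.1.1 w.1.1 := (hS _ _).mpr ⟨u.1.2, u.2, by rw [h]; exact w.2⟩
      exact relPow_mono (hrefl u) hn _ ⟨u.1.1, rfl, hstep⟩
  have horb : ∀ w, Relation.EqvGen
      (fun (u v : {z : k × k // eval ![z.1, z.2] p = 0}) => u.1.1 = v.1.1 ∨ u.1.2 = v.1.2) z w →
      relPow S n z.1.1 w.1.1 := by
    intro w hw
    exact (hQequiv.eqvGen_iff).mp (Relation.EqvGen.mono hRQ _ _ hw)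
  obtain ⟨s, hs, hscard⟩ := hchain n z.1.1
  set G : Finset (k × k) := s.biUnion (fun a => (rset a).image (fun b => (a, b))) with hGdef
  have hsubG : ∀ w : {z : k × k // eval ![z.1, z.2] p = 0},
      relPow S n z.1.1 w.1.1 → w.1 ∈ G := by
    intro w hw
    refine Finset.mem_biUnion.mpr ⟨w.1.1, hs _ hw, ?_⟩
    exact Finset.mem_image.mpr ⟨w.1.2, hrmem _ _ w.2, rfl⟩
  have hGcard : G.card ≤ (p.degreeOf 1 * p.degreeOf 0) ^ n * p.degreeOf 1 := by
    refine Finset.card_biUnion_le.trans ?_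
    calc ∑ a ∈ s, ((rset a).image (fun b => (a, b))).card ≤ s.card * p.degreeOf 1 := by
          simpa using Finset.sum_le_card_nsmul s _ (p.degreeOf 1)
            (fun a _ => (Finset.card_image_le).trans (hrcard a))
      _ ≤ (p.degreeOf 1 * p.degreeOf 0) ^ n * p.degreeOf 1 := Nat.mul_le_mul_right _ hscard
  have hpre : {w | Relation.EqvGen
      (fun (u v : {z : k × k // eval ![z.1, z.2] p = 0}) => u.1.1 = v.1.1 ∨ u.1.2 = v.1.2) z w}
      ⊆ Subtype.val ⁻¹' (↑G : Set (k × k)) := fun w hw => hsubG w (horb w hw)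
  have hdY1 : 1 ≤ p.degreeOf 1 := by
    have hvar : (1 : Fin 2) ∈ p.vars := by
      by_contra hv
      apply hX
      rw [mem_supported]
      intro i hi
      simp only [Set.mem_singleton_iff]
      fin_cases i
      · rfl
      · exact absurd hi hv
    obtain ⟨m, hm, h1m⟩ := (mem_vars 1).mp hvar
    exact le_trans (Nat.one_le_iff_ne_zero.mpr (Finsupp.mem_support_iff.mp h1m))
      (monomial_le_degreeOf 1 hm)
  have harith : (p.degreeOf 1 * p.degreeOf 0) ^ n * p.degreeOf 1 ≤
      (max (p.degreeOf 0) (p.degreeOf 1)) ^ (2 * (n + 1)) := by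
    set d := max (p.degreeOf 0) (p.degreeOf 1) with hd
    have h1 : p.degreeOf 1 * p.degreeOf 0 ≤ d * d :=
      Nat.mul_le_mul (le_max_right _ _) (le_max_left _ _)
    have hd1 : 1 ≤ d := le_trans hdY1 (le_max_right _ _)
    calc (p.degreeOf 1 * p.degreeOf 0) ^ n * p.degreeOf 1 ≤ (d * d) ^ n * d :=
          Nat.mul_le_mul (Nat.pow_le_pow_left h1 n) (le_max_right _ _)
      _ = d ^ (2 * n + 1) := by rw [← pow_two, ← pow_mul, ← pow_succ]
      _ ≤ d ^ (2 * (n + 1)) := Nat.pow_le_pow_right hd1 (by omega)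
  constructor
  · exact Set.Finite.subset (G.finite_toSet.preimage Subtype.val_injective.injOn) hpre
  · have h1 := Set.ncard_le_ncard_of_injOn (t := (↑G : Set (k × k))) Subtype.val
      (fun w hw => Finset.mem_coe.mpr (hsubG w (horb w hw)))
      Subtype.val_injective.injOn G.finite_toSet
    rw [Set.ncard_coe_finset] at h1
    exact h1.trans (hGcard.trans harith)
end

section
/- Let k be an algebraically closed field of characteristic zero, p ∈ k[X,Y] irreducible with p ∉ k[X] and p ∉ k[Y], and assume the coordinate ring A = k[X,Y]/⟨p⟩ is integrally closed. Let O ⊆ Z(p) be a finite orbit of the orbit equivalence relation, and suppose that for every (α,β) ∈ O one has (∂p/∂X)(α,β) ≠ 0 and (∂p/∂Y)(α,β) ≠ 0. Let A₁ ⊆ k be the set of first coordinates of points of O and B₁ ⊆ k the set of second coordinates. Then there exists a unit u of the ring A such that ∏_{λ∈A₁}(x−λ) = u · ∏_{μ∈B₁}(y−μ) in A; in particular the element ∏_{λ∈A₁}(x−λ) / ∏_{μ∈B₁}(y−μ) of the fraction field of A is (the image of) a unit of A. -/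
open MvPolynomial

namespace Stmt3Aux

set_option linter.unusedSectionVars false

variable {k : Type*} [DecidableEq k] [Field k] [IsAlgClosed k]

noncomputable def psiEquiv (k : Type*) [CommSemiring k] :
    MvPolynomial (Fin 1) k ≃ₐ[k] Polynomial k :=
  (MvPolynomial.finSuccEquiv k 0).trans
    (Polynomial.mapAlgEquiv (MvPolynomial.isEmptyAlgEquiv k (Fin 0)))

lemma psi_X : psiEquiv k (X 0) = Polynomial.X := by
  simp [psiEquiv, finSuccEquiv_X_zero]

lemma psi_C (c : k) : psiEquiv k (C c) = Polynomial.C c := by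
  have : (C c : MvPolynomial (Fin 1) k) = algebraMap k _ c := rfl
  rw [this, AlgEquiv.commutes]
  simp [Polynomial.algebraMap_apply]

lemma isUnit_B {b : MvPolynomial (Fin 1) k} (h : IsUnit b) : ∃ c : k, b = C c := by
  have h2 : IsUnit (psiEquiv k b) := h.map (psiEquiv k)
  obtain ⟨r, _, hrb⟩ := Polynomial.isUnit_iff.mp h2
  exact ⟨r, (psiEquiv k).injective (by rw [psi_C]; exact hrb.symm)⟩

lemma exists_linear_dvd {d : MvPolynomial (Fin 1) k} (h0 : d ≠ 0) (hu : ¬ IsUnit d) :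
    ∃ (c : k) (e : MvPolynomial (Fin 1) k), d = (X 0 - C c) * e := by
  have hq0 : psiEquiv k d ≠ 0 := fun h => h0 (by
    have := congrArg (psiEquiv k).symm h
    simpa using this)
  have hdeg : (psiEquiv k d).degree ≠ 0 := by
    intro hd
    apply hu
    have : psiEquiv k d = Polynomial.C ((psiEquiv k d).coeff 0) :=
      Polynomial.eq_C_of_degree_le_zero (le_of_eq hd)
    have hc0 : (psiEquiv k d).coeff 0 ≠ 0 := by
      intro h
      rw [h, map_zero] at this
      exact hq0 this
    have hdC : d = C ((psiEquiv k d).coeff 0) :=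
      (psiEquiv k).injective (by rw [psi_C]; exact this)
    rw [hdC]
    exact isUnit_iff_exists_inv.mpr ⟨C ((psiEquiv k d).coeff 0)⁻¹, by
      rw [← C_mul, mul_inv_cancel₀ hc0, C_1]⟩
  obtain ⟨c, hc⟩ := IsAlgClosed.exists_root _ hdeg
  obtain ⟨e, he⟩ := Polynomial.dvd_iff_isRoot.mpr hc
  refine ⟨c, (psiEquiv k).symm e, (psiEquiv k).injective ?_⟩
  rw [map_mul, map_sub, psi_X, psi_C, AlgEquiv.apply_symm_apply, ← he]

lemma exists_linear_mem {Q : Ideal (Polynomial (MvPolynomial (Fin 1) k))} (hQ : Q.IsPrime)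
    {d : MvPolynomial (Fin 1) k} (h0 : d ≠ 0) (hd : Polynomial.C d ∈ Q) :
    ∃ c : k, Polynomial.C (X 0 - C c) ∈ Q := by
  obtain ⟨n, hn⟩ : ∃ n, (psiEquiv k d).natDegree = n := ⟨_, rfl⟩
  induction n using Nat.strong_induction_on generalizing d with
  | _ n ih =>
    by_cases hu : IsUnit d
    · exact absurd (Q.eq_top_of_isUnit_mem hd (hu.map Polynomial.C)) hQ.ne_top
    obtain ⟨c, e, rfl⟩ := exists_linear_dvd h0 hu
    rw [map_mul] at hd
    rcases hQ.mem_or_mem hd with h | h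
    · exact ⟨c, h⟩
    · have he0 : e ≠ 0 := right_ne_zero_of_mul h0
      have hlin0 : (X 0 - C c : MvPolynomial (Fin 1) k) ≠ 0 :=
        left_ne_zero_of_mul h0
      have hdeg : (psiEquiv k e).natDegree < n := by
        rw [← hn, map_mul, Polynomial.natDegree_mul
          ((map_ne_zero_iff _ (psiEquiv k).injective).mpr hlin0)
          ((map_ne_zero_iff _ (psiEquiv k).injective).mpr he0)]
        rw [map_sub, psi_X, psi_C, Polynomial.natDegree_X_sub_C]
        omega
      exact ih _ hdeg he0 h rfl


lemma vars_subset_fin2 (p : MvPolynomial (Fin 2) k) {i : Fin 2} (h : i ∈ p.vars) :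
    i = 0 ∨ i = 1 := by omega

lemma degreeOf_zero_ne {p : MvPolynomial (Fin 2) k}
    (hY : p ∉ supported k ({1} : Set (Fin 2))) : degreeOf 0 p ≠ 0 := by
  intro h
  apply hY
  rw [mem_supported]
  intro i hi
  simp only [Finset.coe_sort_coe, Set.mem_singleton_iff]
  rcases vars_subset_fin2 p hi with h0 | h1
  · subst h0
    obtain ⟨d, hd, h0d⟩ := (mem_vars _).mp hi
    have : d 0 ≤ degreeOf 0 p := by
      rw [degreeOf_eq_sup]
      exact Finset.le_sup (f := fun m => m 0) hd
    rw [h] at this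
    simp only [Finsupp.mem_support_iff] at h0d
    omega
  · exact h1

set_option maxHeartbeats 1000000 in
lemma exists_X1_sub_C_mem {p : MvPolynomial (Fin 2) k} (hirr : Irreducible p)
    (hY : p ∉ supported k ({1} : Set (Fin 2)))
    {Q : Ideal (MvPolynomial (Fin 2) k)} (hQ : Q.IsPrime) (hpQ : p ∈ Q)
    {q : MvPolynomial (Fin 2) k} (hqQ : q ∈ Q) (hq : q ∉ Ideal.span {p}) :
    ∃ b : k, X 1 - C b ∈ Q := by
  classical
  set B := MvPolynomial (Fin 1) k
  set Φ := MvPolynomial.finSuccEquiv k 1 with hΦ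
  have hΦdeg : (Φ p).natDegree ≠ 0 := by
    rw [natDegree_finSuccEquiv]; exact degreeOf_zero_ne hY
  have hΦirr : Irreducible (Φ p) := (MulEquiv.irreducible_iff Φ).mpr hirr
  have hprim : (Φ p).IsPrimitive := by
    intro r hr
    obtain ⟨t, ht⟩ := hr
    rcases hΦirr.isUnit_or_isUnit ht with h | h
    · exact Polynomial.isUnit_C.mp h
    · exfalso
      apply hΦdeg
      have : (Φ p).natDegree ≤ 0 := by
        calc (Φ p).natDegree = (Polynomial.C r * t).natDegree := by rw [ht]
          _ ≤ (Polynomial.C r).natDegree + t.natDegree := Polynomial.natDegree_mul_le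
          _ = 0 := by
              rw [Polynomial.natDegree_C, Polynomial.natDegree_eq_zero_of_isUnit h]
      omega
  letI : NormalizationMonoid B := UniqueFactorizationMonoid.normalizationMonoid.toNormalizationMonoid
  letI : NormalizedGCDMonoid B := UniqueFactorizationMonoid.toNormalizedGCDMonoid B
  set K := FractionRing B
  have hinj : Function.Injective (algebraMap B K) := IsFractionRing.injective B K
  have hmapinj : Function.Injective
      (Polynomial.map (algebraMap B K) : Polynomial B → Polynomial K) :=
    Polynomial.map_injective _ hinj
  have hKirr : Irreducible ((Φ p).map (algebraMap B K)) :=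
    hprim.irreducible_iff_irreducible_map_fraction_map.mp hΦirr
  have hnd : ¬ ((Φ p).map (algebraMap B K) ∣ (Φ q).map (algebraMap B K)) := by
    rintro ⟨h, hh⟩
    obtain ⟨⟨c, hc0⟩, hc⟩ :=
      IsLocalization.integerNormalization_map_to_map (nonZeroDivisors B) h
    have heq : Φ p * IsLocalization.integerNormalization (nonZeroDivisors B) h
        = Polynomial.C c * Φ q := by
      apply hmapinj
      rw [Polynomial.map_mul, Polynomial.map_mul, Polynomial.map_C, hc,
        Algebra.smul_def, Polynomial.algebraMap_apply, hh]
      ring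
    have hdvd : Φ p ∣ Polynomial.C c * Φ q := ⟨_, heq.symm⟩
    have hΦprime : Prime (Φ p) := UniqueFactorizationMonoid.irreducible_iff_prime.mp hΦirr
    rcases hΦprime.2.2 _ _ hdvd with h1 | h1
    · have hcne : (Polynomial.C c : Polynomial B) ≠ 0 := by
        simp [mem_nonZeroDivisors_iff_ne_zero.mp hc0]
      have := Polynomial.natDegree_le_of_dvd h1 hcne
      rw [Polynomial.natDegree_C] at this
      omega
    · obtain ⟨t, ht⟩ := h1
      apply hq
      rw [Ideal.mem_span_singleton]
      refine ⟨Φ.symm t, ?_⟩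
      have : q = Φ.symm (Φ p * t) := by rw [← ht, AlgEquiv.symm_apply_apply]
      rw [this, map_mul, AlgEquiv.symm_apply_apply]
  have hcop : IsCoprime ((Φ p).map (algebraMap B K)) ((Φ q).map (algebraMap B K)) :=
    (hKirr.coprime_iff_not_dvd).mpr hnd
  obtain ⟨a, b, hab⟩ := hcop
  obtain ⟨⟨ca, hca0⟩, ha⟩ :=
    IsLocalization.integerNormalization_map_to_map (nonZeroDivisors B) a
  obtain ⟨⟨cb, hcb0⟩, hb⟩ :=
    IsLocalization.integerNormalization_map_to_map (nonZeroDivisors B) b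
  set na := IsLocalization.integerNormalization (nonZeroDivisors B) a
  set nb := IsLocalization.integerNormalization (nonZeroDivisors B) b
  have key : Φ p * (Polynomial.C cb * na) + Φ q * (Polynomial.C ca * nb)
      = Polynomial.C (ca * cb) := by
    apply hmapinj
    rw [Polynomial.map_add, Polynomial.map_mul, Polynomial.map_mul, Polynomial.map_mul,
      Polynomial.map_mul, Polynomial.map_C, Polynomial.map_C, Polynomial.map_C, ha, hb,
      Algebra.smul_def, Algebra.smul_def, Polynomial.algebraMap_apply,
      Polynomial.algebraMap_apply, map_mul, Polynomial.C_mul]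
    linear_combination (Polynomial.C ((algebraMap B K) ca) *
      Polynomial.C ((algebraMap B K) cb)) * hab
  set Qhat : Ideal (Polynomial B) := Ideal.comap (Φ.symm : Polynomial B ≃ₐ[k] _) Q with hQhat
  haveI hQhatP : Qhat.IsPrime := hQ.comap _
  have hmem : ∀ f : MvPolynomial (Fin 2) k, f ∈ Q → Φ f ∈ Qhat := by
    intro f hf
    show Φ.symm (Φ f) ∈ Q
    rwa [AlgEquiv.symm_apply_apply]
  have hCmem : Polynomial.C (ca * cb) ∈ Qhat := by
    rw [← key]
    exact Ideal.add_mem _ (Ideal.mul_mem_right _ _ (hmem p hpQ))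
      (Ideal.mul_mem_right _ _ (hmem q hqQ))
  have hcc0 : ca * cb ≠ 0 :=
    mul_ne_zero (mem_nonZeroDivisors_iff_ne_zero.mp hca0)
      (mem_nonZeroDivisors_iff_ne_zero.mp hcb0)
  obtain ⟨c, hc⟩ := exists_linear_mem hQhatP hcc0 hCmem
  refine ⟨c, ?_⟩
  have hφ : Φ (X 1 - C c) = Polynomial.C (X 0 - C c : B) := by
    rw [map_sub]
    have h1 : Φ (X 1 : MvPolynomial (Fin 2) k) = Polynomial.C (X 0 : B) := by
      have : (1 : Fin 2) = Fin.succ 0 := rfl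
      rw [this, hΦ, finSuccEquiv_X_succ]
    have h2 : Φ (C c : MvPolynomial (Fin 2) k) = Polynomial.C (C c : B) := by
      have hc1 : (C c : MvPolynomial (Fin 2) k) = algebraMap k _ c := rfl
      rw [hc1, AlgEquiv.commutes, Polynomial.algebraMap_apply]
      rfl
    rw [h1, h2, ← map_sub]
  have := hc
  rw [← hφ] at this
  have h3 : Φ.symm (Φ (X 1 - C c)) ∈ Q := this
  rwa [AlgEquiv.symm_apply_apply] at h3


lemma rename_swap_supported {q : MvPolynomial (Fin 2) k} {i : Fin 2}
    (h : q ∈ supported k ({i} : Set (Fin 2))) :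
    rename (Equiv.swap (0 : Fin 2) 1) q
      ∈ supported k ({Equiv.swap (0 : Fin 2) 1 i} : Set (Fin 2)) := by
  rw [mem_supported] at h ⊢
  intro v hv
  have hv' := vars_rename (Equiv.swap (0 : Fin 2) 1) q (by simpa using hv)
  simp only [Finset.mem_image] at hv'
  obtain ⟨u, hu, rfl⟩ := hv'
  have : u ∈ ({i} : Set (Fin 2)) := h (by simpa using hu)
  simp only [Set.mem_singleton_iff] at this
  subst this
  simp

lemma rename_swap_rename_swap (q : MvPolynomial (Fin 2) k) :
    rename (Equiv.swap (0 : Fin 2) 1) (rename (Equiv.swap (0 : Fin 2) 1) q) = q := by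
  rw [rename_rename]
  have : (Equiv.swap (0 : Fin 2) 1) ∘ (Equiv.swap (0 : Fin 2) 1) = id := by
    funext x; simp
  rw [this, rename_id, AlgHom.id_apply]

lemma not_supported_swap {p : MvPolynomial (Fin 2) k} {i : Fin 2}
    (hX : p ∉ supported k ({i} : Set (Fin 2))) :
    rename (Equiv.swap (0 : Fin 2) 1) p
      ∉ supported k ({Equiv.swap (0 : Fin 2) 1 i} : Set (Fin 2)) := by
  intro h
  apply hX
  have := rename_swap_supported h
  rw [rename_swap_rename_swap] at this
  simpa using this

lemma exists_X0_sub_C_mem {p : MvPolynomial (Fin 2) k} (hirr : Irreducible p)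
    (hX : p ∉ supported k ({0} : Set (Fin 2)))
    {Q : Ideal (MvPolynomial (Fin 2) k)} (hQ : Q.IsPrime) (hpQ : p ∈ Q)
    {q : MvPolynomial (Fin 2) k} (hqQ : q ∈ Q) (hq : q ∉ Ideal.span {p}) :
    ∃ a : k, X 0 - C a ∈ Q := by
  set e := renameEquiv k (Equiv.swap (0 : Fin 2) 1) with he
  have hesymm : ∀ f, e.symm (e f) = f := fun f => e.symm_apply_apply f
  set Q' : Ideal (MvPolynomial (Fin 2) k) := Ideal.comap (e.symm : _ ≃ₐ[k] _) Q with hQ'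
  haveI : Q'.IsPrime := hQ.comap _
  have hmem : ∀ f, f ∈ Q → e f ∈ Q' := by
    intro f hf
    show e.symm (e f) ∈ Q
    rwa [hesymm]
  have hirr' : Irreducible (e p) := (MulEquiv.irreducible_iff e).mpr hirr
  have hY' : e p ∉ supported k ({1} : Set (Fin 2)) := by
    have := not_supported_swap (i := 0) hX
    simpa [he, renameEquiv_apply] using this
  have hq' : e q ∉ Ideal.span {e p} := by
    intro h
    apply hq
    rw [Ideal.mem_span_singleton] at h ⊢
    obtain ⟨t, ht⟩ := h
    refine ⟨e.symm t, ?_⟩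
    have : q = e.symm (e p * t) := by rw [← ht, hesymm]
    rw [this, map_mul, hesymm]
  obtain ⟨b, hb⟩ := exists_X1_sub_C_mem hirr' hY' ‹Q'.IsPrime› (hmem p hpQ) (hmem q hqQ) hq'
  refine ⟨b, ?_⟩
  have : e.symm (X 1 - C b) ∈ Q := hb
  rw [map_sub] at this
  have h1 : e.symm (X 1 : MvPolynomial (Fin 2) k) = X 0 := by
    rw [he, renameEquiv_symm, renameEquiv_apply, rename_X]
    simp
  have h2 : e.symm (C b : MvPolynomial (Fin 2) k) = C b := by
    rw [he, renameEquiv_symm, renameEquiv_apply, rename_C]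
  rwa [h1, h2] at this

lemma sub_C_eval_mem_span (w : Fin 2 → k) (f : MvPolynomial (Fin 2) k) :
    f - C (eval w f)
      ∈ Ideal.span ({X 0 - C (w 0), X 1 - C (w 1)} : Set (MvPolynomial (Fin 2) k)) := by
  induction f using MvPolynomial.induction_on with
  | C a => simp
  | add f g hf hg =>
      have h : f + g - C (eval w (f + g)) = (f - C (eval w f)) + (g - C (eval w g)) := by
        rw [map_add, C_add]; ring
      rw [h]; exact Ideal.add_mem _ hf hg
  | mul_X f i hf =>
      have h : f * X i - C (eval w (f * X i))
          = f * (X i - C (w i)) + C (w i) * (f - C (eval w f)) := by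
        rw [map_mul, eval_X, C_mul]; ring
      rw [h]
      refine Ideal.add_mem _ (Ideal.mul_mem_left _ _ (Ideal.subset_span ?_))
        (Ideal.mul_mem_left _ _ hf)
      fin_cases i
      · exact Set.mem_insert _ _
      · exact Set.mem_insert_of_mem _ rfl

lemma eq_ker_eval {Q : Ideal (MvPolynomial (Fin 2) k)} (hQt : Q ≠ ⊤) {w : Fin 2 → k}
    (ha : X 0 - C (w 0) ∈ Q) (hb : X 1 - C (w 1) ∈ Q) :
    Q = RingHom.ker (eval w : MvPolynomial (Fin 2) k →+* k) := by
  have hspan : Ideal.span ({X 0 - C (w 0), X 1 - C (w 1)} : Set (MvPolynomial (Fin 2) k)) ≤ Q := by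
    rw [Ideal.span_le]
    rintro x hx
    simp only [Set.mem_insert_iff, Set.mem_singleton_iff] at hx
    rcases hx with rfl | rfl
    · exact ha
    · exact hb
  ext f
  constructor
  · intro hf
    rw [RingHom.mem_ker]
    by_contra h
    have hC : C (eval w f) ∈ Q := by
      have h2 := hspan (sub_C_eval_mem_span w f)
      have : C (eval w f) = f - (f - C (eval w f)) := by ring
      rw [this]
      exact Ideal.sub_mem _ hf h2
    exact hQt (Q.eq_top_of_isUnit_mem hC
      (isUnit_iff_exists_inv.mpr ⟨C (eval w f)⁻¹, by rw [← C_mul, mul_inv_cancel₀ h, C_1]⟩))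
  · intro hf
    rw [RingHom.mem_ker] at hf
    have h2 := hspan (sub_C_eval_mem_span w f)
    rwa [hf, map_zero, sub_zero] at h2

lemma prime_classify {p : MvPolynomial (Fin 2) k} (hirr : Irreducible p)
    (hX : p ∉ supported k ({0} : Set (Fin 2))) (hY : p ∉ supported k ({1} : Set (Fin 2)))
    {Q : Ideal (MvPolynomial (Fin 2) k)}
    (hQ : Q.IsPrime) (hpQ : p ∈ Q) (hne : Q ≠ Ideal.span {p}) :
    ∃ w : Fin 2 → k, Q = RingHom.ker (eval w : MvPolynomial (Fin 2) k →+* k) := by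
  have hle : Ideal.span {p} ≤ Q := by rw [Ideal.span_le]; simpa using hpQ
  obtain ⟨q, hqQ, hq⟩ := SetLike.exists_of_lt (lt_of_le_of_ne hle (Ne.symm hne))
  obtain ⟨a, ha⟩ := exists_X0_sub_C_mem hirr hX hQ hpQ hqQ hq
  obtain ⟨b, hb⟩ := exists_X1_sub_C_mem hirr hY hQ hpQ hqQ hq
  refine ⟨![a, b], eq_ker_eval hQ.ne_top ?_ ?_⟩
  · simpa using ha
  · simpa using hb


lemma not_dvd_X0 {p : MvPolynomial (Fin 2) k} (hirr : Irreducible p)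
    (hX : p ∉ supported k ({0} : Set (Fin 2))) (hY : p ∉ supported k ({1} : Set (Fin 2)))
    (a : k) : X 0 - C a ∉ Ideal.span {p} := by
  intro hmem
  rw [Ideal.mem_span_singleton] at hmem
  obtain ⟨g, hg⟩ := hmem
  set Φ := MvPolynomial.finSuccEquiv k 1 with hΦ
  have hΦdeg : (Φ p).natDegree ≠ 0 := by
    rw [natDegree_finSuccEquiv]; exact degreeOf_zero_ne hY
  have heq : Polynomial.X - Polynomial.C (C a : MvPolynomial (Fin 1) k) = Φ p * Φ g := by
    have h0 : Φ (X 0 : MvPolynomial (Fin 2) k) = Polynomial.X := finSuccEquiv_X_zero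
    have h2 : Φ (C a : MvPolynomial (Fin 2) k) = Polynomial.C (C a : MvPolynomial (Fin 1) k) := by
      have hc1 : (C a : MvPolynomial (Fin 2) k) = algebraMap k _ a := rfl
      rw [hc1, AlgEquiv.commutes, Polynomial.algebraMap_apply]
      rfl
    rw [← h0, ← h2, ← map_sub, hg, map_mul]
  rcases (Polynomial.irreducible_X_sub_C (C a : MvPolynomial (Fin 1) k)).isUnit_or_isUnit heq
    with h | h
  · exact hΦdeg (Polynomial.natDegree_eq_zero_of_isUnit h)
  · obtain ⟨r, hru, hr⟩ := Polynomial.isUnit_iff.mp h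
    obtain ⟨c, rfl⟩ := isUnit_B hru
    have hc0 : c ≠ 0 := by
      rintro rfl
      simp only [map_zero] at hru
      exact hru.ne_zero rfl
    have hgC : g = C c := by
      apply Φ.injective
      rw [← hr]
      have : (C c : MvPolynomial (Fin 2) k) = algebraMap k _ c := rfl
      rw [this, AlgEquiv.commutes, Polynomial.algebraMap_apply]
      rfl
    apply hX
    have hp : p = (X 0 - C a) * C c⁻¹ := by
      rw [hg, hgC, mul_assoc, ← C_mul, mul_inv_cancel₀ hc0, C_1, mul_one]
    rw [hp]
    refine Subalgebra.mul_mem _ (Subalgebra.sub_mem _ ?_ ?_) ?_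
    · exact (X_mem_supported (R := k)).mpr rfl
    · exact Subalgebra.algebraMap_mem _ a
    · exact Subalgebra.algebraMap_mem _ c⁻¹

lemma not_dvd_X1 {p : MvPolynomial (Fin 2) k} (hirr : Irreducible p)
    (hX : p ∉ supported k ({0} : Set (Fin 2))) (hY : p ∉ supported k ({1} : Set (Fin 2)))
    (b : k) : X 1 - C b ∉ Ideal.span {p} := by
  intro hmem
  rw [Ideal.mem_span_singleton] at hmem
  obtain ⟨g, hg⟩ := hmem
  set e := renameEquiv k (Equiv.swap (0 : Fin 2) 1) with he
  have hirr' : Irreducible (e p) := (MulEquiv.irreducible_iff e).mpr hirr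
  have hX' : e p ∉ supported k ({1} : Set (Fin 2)) := by
    have := not_supported_swap (i := 0) hX
    simpa [he, renameEquiv_apply] using this
  have hY' : e p ∉ supported k ({0} : Set (Fin 2)) := by
    have := not_supported_swap (i := 1) hY
    simpa [he, renameEquiv_apply] using this
  apply not_dvd_X0 hirr' hY' hX' b
  rw [Ideal.mem_span_singleton]
  refine ⟨e g, ?_⟩
  have : X 0 - C b = e (X 1 - C b) := by
    rw [map_sub]
    have h1 : e (X 1 : MvPolynomial (Fin 2) k) = X 0 := by
      rw [he, renameEquiv_apply, rename_X]; simp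
    have h2 : e (C b : MvPolynomial (Fin 2) k) = C b := by
      have : (C b : MvPolynomial (Fin 2) k) = algebraMap k _ b := rfl
      rw [this, AlgEquiv.commutes]
    rw [h1, h2]
  rw [this, hg, map_mul]

end Stmt3Aux


open Stmt3Aux UniqueFactorizationMonoid in
set_option maxHeartbeats 2000000 in
theorem stmt_3 {k : Type*} [DecidableEq k] [Field k] [IsAlgClosed k] [CharZero k]
    (p : MvPolynomial (Fin 2) k) (hirr : Irreducible p)
    (hX : p ∉ supported k ({0} : Set (Fin 2)))
    (hY : p ∉ supported k ({1} : Set (Fin 2)))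
    (hnormal : IsIntegrallyClosed (MvPolynomial (Fin 2) k ⧸ Ideal.span {p}))
    (O : Set {z : k × k // eval ![z.1, z.2] p = 0})
    (horb : ∃ z, O = {w | Relation.EqvGen
        (fun u v => u.1.1 = v.1.1 ∨ u.1.2 = v.1.2) z w})
    (hfin : O.Finite)
    (hsm : ∀ w ∈ O, eval ![w.1.1, w.1.2] (pderiv 0 p) ≠ 0 ∧
                    eval ![w.1.1, w.1.2] (pderiv 1 p) ≠ 0) :
    ∃ u : (MvPolynomial (Fin 2) k ⧸ Ideal.span {p})ˣ,
      ∏ lam ∈ hfin.toFinset.image (fun w => w.1.1),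
          (Ideal.Quotient.mk (Ideal.span {p}) (X 0) -
            algebraMap k (MvPolynomial (Fin 2) k ⧸ Ideal.span {p}) lam) =
        (u : MvPolynomial (Fin 2) k ⧸ Ideal.span {p}) *
          ∏ mu ∈ hfin.toFinset.image (fun w => w.1.2),
            (Ideal.Quotient.mk (Ideal.span {p}) (X 1) -
              algebraMap k (MvPolynomial (Fin 2) k ⧸ Ideal.span {p}) mu) := by
  classical
  set I : Ideal (MvPolynomial (Fin 2) k) := Ideal.span {p} with hI
  have hp0 : p ≠ 0 := hirr.ne_zero
  have hpp : Prime p := UniqueFactorizationMonoid.irreducible_iff_prime.mp hirr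
  haveI hIP : I.IsPrime := (Ideal.span_singleton_prime hp0).mpr hpp
  set mkq : MvPolynomial (Fin 2) k →+* (MvPolynomial (Fin 2) k ⧸ I) :=
    Ideal.Quotient.mk I with hmkq
  -- point utilities
  set wv : {z : k × k // eval ![z.1, z.2] p = 0} → (Fin 2 → k) :=
    fun w => ![w.1.1, w.1.2] with hwv
  have hwvp : ∀ w, eval (wv w) p = 0 := fun w => w.2
  have hIker : ∀ w, ∀ f ∈ I, eval (wv w) f = 0 := by
    intro w f hf
    rw [hI, Ideal.mem_span_singleton] at hf
    obtain ⟨c, rfl⟩ := hf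
    rw [map_mul, hwvp w, zero_mul]
  set ev : ∀ _ : {z : k × k // eval ![z.1, z.2] p = 0},
      (MvPolynomial (Fin 2) k ⧸ I) →+* k :=
    fun w => Ideal.Quotient.lift I (eval (wv w)) (hIker w) with hev
  have hmk : ∀ w f, ev w (mkq f) = eval (wv w) f := by
    intro w f
    rw [hev, hmkq]
    exact Ideal.Quotient.lift_mk I _ _
  set m : {z : k × k // eval ![z.1, z.2] p = 0} → Ideal (MvPolynomial (Fin 2) k ⧸ I) :=
    fun w => RingHom.ker (ev w) with hm
  have hmem : ∀ w f, mkq f ∈ m w ↔ eval (wv w) f = 0 := by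
    intro w f
    rw [hm, RingHom.mem_ker, hmk]
  have hevsurj : ∀ w, Function.Surjective (ev w) := by
    intro w c
    exact ⟨mkq (C c), by rw [hmk]; simp⟩
  have hmax : ∀ w, (m w).IsMaximal := fun w =>
    RingHom.ker_isMaximal_of_surjective (ev w) (hevsurj w)
  have hcomap : ∀ w, Ideal.comap mkq (m w) = RingHom.ker (eval (wv w)) := by
    intro w
    ext f
    rw [Ideal.mem_comap, hmem w f]
    exact Iff.symm RingHom.mem_ker
  have hminj : Function.Injective m := by
    intro w v h
    have key : ∀ j : Fin 2, wv w j = wv v j := by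
      intro j
      have h1 : mkq (X j - C (wv w j)) ∈ m w := by
        rw [hmem]; simp
      rw [h, hmem] at h1
      simp only [map_sub, eval_X, eval_C, sub_eq_zero] at h1
      exact h1.symm
    have h0 := key 0
    have h1 := key 1
    rw [hwv] at h0 h1
    simp only [Matrix.cons_val_zero, Matrix.cons_val_one, Matrix.head_cons] at h0 h1
    exact Subtype.ext (Prod.ext h0 h1)
  have hmne : ∀ w, m w ≠ ⊥ := by
    intro w hbot
    have h1 : mkq (X 0 - C (wv w 0)) ∈ m w := by rw [hmem]; simp
    rw [hbot, Ideal.mem_bot, hmkq, Ideal.Quotient.eq_zero_iff_mem, hI] at h1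
    exact not_dvd_X0 hirr hX hY (wv w 0) h1
  -- Dedekind domain structure
  haveI : IsDomain (MvPolynomial (Fin 2) k ⧸ I) := Ideal.Quotient.isDomain I
  haveI hdim : Ring.DimensionLEOne (MvPolynomial (Fin 2) k ⧸ I) := by
    constructor
    intro P hPb hPp
    set Q := Ideal.comap mkq P with hQd
    haveI hQp : Q.IsPrime := hPp.comap mkq
    have hpz : mkq p = 0 := by
      rw [hmkq, Ideal.Quotient.eq_zero_iff_mem]
      exact Ideal.subset_span rfl
    have hpQ : p ∈ Q := by
      rw [hQd, Ideal.mem_comap, hpz]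
      exact P.zero_mem
    have hQne : Q ≠ I := by
      intro h
      apply hPb
      have hP : P = Ideal.map mkq Q :=
        (Ideal.map_comap_of_surjective mkq Ideal.Quotient.mk_surjective P).symm
      have hmap : Ideal.map mkq I = ⊥ := by
        apply le_bot_iff.mp
        rw [Ideal.map_le_iff_le_comap]
        intro x hx
        rw [Ideal.mem_comap, Ideal.mem_bot, hmkq, Ideal.Quotient.eq_zero_iff_mem]
        exact hx
      rw [hP, h, hmap]
    obtain ⟨w', hw'⟩ := prime_classify hirr hX hY hQp hpQ hQne
    have hkmax : (RingHom.ker (eval w' : MvPolynomial (Fin 2) k →+* k)).IsMaximal :=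
      RingHom.ker_isMaximal_of_surjective _ (fun c => ⟨C c, eval_C _⟩)
    have hQmax : Q.IsMaximal := hw' ▸ hkmax
    have hP : P = Ideal.map mkq Q :=
      (Ideal.map_comap_of_surjective mkq Ideal.Quotient.mk_surjective P).symm
    rcases Ideal.map_eq_top_or_isMaximal_of_surjective mkq Ideal.Quotient.mk_surjective hQmax
      with h | h
    · exact absurd (hP.trans h) hPp.ne_top
    · exact hP ▸ h
  haveI := hnormal
  haveI : IsIntegralClosure (MvPolynomial (Fin 2) k ⧸ I) (MvPolynomial (Fin 2) k ⧸ I)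
      (FractionRing (MvPolynomial (Fin 2) k ⧸ I)) :=
    (isIntegrallyClosed_iff_isIntegralClosure
      (K := FractionRing (MvPolynomial (Fin 2) k ⧸ I))).mp hnormal
  haveI : IsDedekindRing (MvPolynomial (Fin 2) k ⧸ I) := ⟨⟩
  haveI : IsDedekindDomain (MvPolynomial (Fin 2) k ⧸ I) := ⟨⟩
  -- the derivation functional
  set Dw : {z : k × k // eval ![z.1, z.2] p = 0} → MvPolynomial (Fin 2) k → k :=
    fun w f => eval (wv w) (pderiv 1 p) * eval (wv w) (pderiv 0 f)
      - eval (wv w) (pderiv 0 p) * eval (wv w) (pderiv 1 f) with hDw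
  have hDadd : ∀ w f g, Dw w (f + g) = Dw w f + Dw w g := by
    intro w f g
    simp only [hDw, map_add]
    ring
  have hDmul : ∀ w f g, Dw w (f * g)
      = eval (wv w) f * Dw w g + eval (wv w) g * Dw w f := by
    intro w f g
    simp only [hDw, pderiv_mul, map_add, map_mul]
    ring
  have hkill : ∀ w (f : MvPolynomial (Fin 2) k),
      f ∈ (RingHom.ker (eval (wv w) : MvPolynomial (Fin 2) k →+* k)) ^ 2 ⊔ I →
      Dw w f = 0 := by
    intro w f hf
    rw [Submodule.mem_sup] at hf
    obtain ⟨g, hg, h, hh, rfl⟩ := hf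
    rw [hDadd]
    have hDg : Dw w g = 0 := by
      rw [pow_two] at hg
      refine Submodule.mul_induction_on hg ?_ ?_
      · intro a ha b hb
        have ha' : eval (wv w) a = 0 := ha
        have hb' : eval (wv w) b = 0 := hb
        rw [hDmul, ha', hb']
        ring
      · intro x y hx hy
        rw [hDadd, hx, hy, add_zero]
    have hDh : Dw w h = 0 := by
      rw [hI, Ideal.mem_span_singleton] at hh
      obtain ⟨c, rfl⟩ := hh
      have hDp : Dw w p = 0 := by simp only [hDw]; ring
      rw [hDmul, hwvp w, hDp]
      ring
    rw [hDg, hDh, add_zero]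
  -- main counting lemma
  set T := hfin.toFinset with hT
  have hTmem : ∀ w, w ∈ T ↔ w ∈ O := fun w => hfin.mem_toFinset
  have horbcl : ∀ (v w : {z : k × k // eval ![z.1, z.2] p = 0}), w ∈ T →
      (v.1.1 = w.1.1 ∨ v.1.2 = w.1.2) → v ∈ T := by
    intro v w hw hrel
    obtain ⟨z, hz⟩ := horb
    rw [hTmem] at hw ⊢
    rw [hz] at hw ⊢
    refine Relation.EqvGen.trans _ _ _ hw (Relation.EqvGen.rel _ _ ?_)
    rcases hrel with h | h
    · exact Or.inl h.symm
    · exact Or.inr h.symm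
  have main : ∀ (i : Fin 2) (cd : {z : k × k // eval ![z.1, z.2] p = 0} → k),
      (∀ w, cd w = wv w i) →
      normalizedFactors (Ideal.span {∏ c ∈ T.image cd, (mkq (X i) - mkq (C c))})
        = T.val.map m := by
    intro i cd hcd
    have hfac : ∀ c : k, mkq (X i) - mkq (C c) = mkq (X i - C c) :=
      fun c => (map_sub mkq _ _).symm
    have hfacne : ∀ c : k, mkq (X i) - mkq (C c) ≠ 0 := by
      intro c
      rw [hfac, hmkq, Ne, Ideal.Quotient.eq_zero_iff_mem]
      have hi : i = 0 ∨ i = 1 := by omega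
      rcases hi with rfl | rfl
      · exact not_dvd_X0 hirr hX hY c
      · exact not_dvd_X1 hirr hX hY c
    by_cases hTe : T = ∅
    · rw [hTe]
      simp only [Finset.image_empty, Finset.prod_empty, Finset.empty_val, Multiset.map_zero]
      rw [Ideal.span_singleton_one, ← Ideal.one_eq_top, normalizedFactors_one]
    obtain ⟨w0, hw0⟩ := Finset.nonempty_iff_ne_empty.mpr hTe
    rw [Multiset.ext]
    intro J
    by_cases hJ : ∃ w ∈ T, J = m w
    · obtain ⟨w, hwT, rfl⟩ := hJ
      have hR : (T.val.map m).count (m w) = 1 := by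
        rw [Multiset.count_map_eq_count' m T.val hminj,
          Multiset.count_eq_one_of_mem T.nodup (Finset.mem_val.mpr hwT)]
      rw [hR]
      haveI := (hmax w).isPrime
      have hcw : cd w ∈ T.image cd := Finset.mem_image_of_mem cd hwT
      apply Ideal.count_normalizedFactors_eq (n := 1)
      · rw [pow_one, Ideal.span_le, Set.singleton_subset_iff]
        obtain ⟨t, ht⟩ := Finset.dvd_prod_of_mem (fun c => mkq (X i) - mkq (C c)) hcw
        rw [ht]
        refine Ideal.mul_mem_right _ _ ?_
        rw [hfac, hmem]
        rw [map_sub, eval_X, eval_C, hcd w, sub_self]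
      · intro hle
        have hFpm : (∏ c ∈ T.image cd, (mkq (X i) - mkq (C c))) ∈ (m w) ^ 2 := by
          refine hle (Ideal.subset_span rfl)
        have hmN : m w
            = Ideal.map mkq (RingHom.ker (eval (wv w) : MvPolynomial (Fin 2) k →+* k)) := by
          apply le_antisymm
          · intro x hx
            obtain ⟨f, rfl⟩ := Ideal.Quotient.mk_surjective x
            refine Ideal.mem_map_of_mem mkq ?_
            rw [← hcomap w, Ideal.mem_comap]
            exact hx
          · rw [Ideal.map_le_iff_le_comap, hcomap w]
        rw [hmN, ← Ideal.map_pow] at hFpm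
        have hmkFhat : (∏ c ∈ T.image cd, (mkq (X i) - mkq (C c)))
            = mkq (∏ c ∈ T.image cd, (X i - C c)) := by
          rw [map_prod]
          exact Finset.prod_congr rfl fun c _ => hfac c
        rw [hmkFhat] at hFpm
        obtain ⟨g, hg, hgeq⟩ :=
          (Ideal.mem_map_iff_of_surjective mkq Ideal.Quotient.mk_surjective).mp hFpm
        have hdiff : g - (∏ c ∈ T.image cd, (X i - C c)) ∈ I := by
          have hz : mkq (g - ∏ c ∈ T.image cd, (X i - C c)) = 0 := by
            rw [map_sub, hgeq, sub_self]
          rw [hmkq, Ideal.Quotient.eq_zero_iff_mem] at hz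
          exact hz
        have hsup : (∏ c ∈ T.image cd, (X i - C c))
            ∈ (RingHom.ker (eval (wv w) : MvPolynomial (Fin 2) k →+* k)) ^ 2 ⊔ I := by
          rw [Submodule.mem_sup]
          exact ⟨g, hg, -(g - ∏ c ∈ T.image cd, (X i - C c)), neg_mem hdiff, by ring⟩
        have hDzero := hkill w _ hsup
        have hexp : (∏ c ∈ T.image cd, (X i - C c))
            = (X i - C (cd w)) * ∏ c ∈ (T.image cd).erase (cd w), (X i - C c) :=
          (Finset.mul_prod_erase _ _ hcw).symm
        have hU : eval (wv w) (∏ c ∈ (T.image cd).erase (cd w), (X i - C c)) ≠ 0 := by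
          rw [map_prod, Finset.prod_ne_zero_iff]
          intro c hc
          simp only [map_sub, eval_X, eval_C, sub_ne_zero]
          intro hEq
          exact (Finset.ne_of_mem_erase hc) (by rw [← hEq, hcd w])
        have hlin0 : eval (wv w) (X i - C (cd w)) = 0 := by
          rw [map_sub, eval_X, eval_C, hcd w, sub_self]
        have hDlin : Dw w (X i - C (cd w)) ≠ 0 := by
          have hsmw := hsm w ((hTmem w).mp hwT)
          have hi : i = 0 ∨ i = 1 := by omega
          rcases hi with rfl | rfl
          · simp only [hDw, map_sub, pderiv_X_self, pderiv_C,
              pderiv_X_of_ne (show (0 : Fin 2) ≠ 1 by decide), sub_zero, map_one, map_zero,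
              mul_one, mul_zero]
            exact hsmw.2
          · simp only [hDw, map_sub, pderiv_X_self, pderiv_C,
              pderiv_X_of_ne (show (1 : Fin 2) ≠ 0 by decide), sub_zero, map_one, map_zero,
              mul_one, mul_zero, zero_sub, neg_ne_zero]
            exact hsmw.1
        rw [hexp, hDmul, hlin0, zero_mul, zero_add] at hDzero
        rcases mul_eq_zero.mp hDzero with h | h
        · exact hU h
        · exact hDlin h
    · have hR : (T.val.map m).count J = 0 := by
        rw [Multiset.count_eq_zero]
        intro hmem'
        obtain ⟨w, hwT, hwJ⟩ := Multiset.mem_map.mp hmem'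
        exact hJ ⟨w, Finset.mem_val.mp hwT, hwJ.symm⟩
      rw [hR, Multiset.count_eq_zero]
      intro hJmem
      have hJprime : Prime J := prime_of_normalized_factor J hJmem
      have hJne : J ≠ ⊥ := by
        intro h
        exact hJprime.ne_zero (by rw [h]; rfl)
      haveI hJP : J.IsPrime := Ideal.isPrime_of_prime hJprime
      have hJmax : J.IsMaximal := Ideal.IsPrime.isMaximal hJP hJne
      have hFJ : (∏ c ∈ T.image cd, (mkq (X i) - mkq (C c))) ∈ J := by
        have hdvd := dvd_of_mem_normalizedFactors hJmem
        exact (Ideal.le_of_dvd hdvd) (Ideal.subset_span rfl)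
      set Q := Ideal.comap mkq J with hQd
      haveI hQmax : Q.IsMaximal :=
        Ideal.comap_isMaximal_of_surjective mkq Ideal.Quotient.mk_surjective
      have hpz : mkq p = 0 := by
        rw [hmkq, Ideal.Quotient.eq_zero_iff_mem]
        exact Ideal.subset_span rfl
      have hpQ : p ∈ Q := by
        rw [hQd, Ideal.mem_comap, hpz]
        exact J.zero_mem
      have hQne : Q ≠ I := by
        intro h
        have hImax : I.IsMaximal := h ▸ hQmax
        have hklt : I ≤ RingHom.ker (eval (wv w0) : MvPolynomial (Fin 2) k →+* k) := by
          rw [hI, Ideal.span_le, Set.singleton_subset_iff]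
          exact hwvp w0
        have hkermax : (RingHom.ker (eval (wv w0) : MvPolynomial (Fin 2) k →+* k)).IsMaximal :=
          RingHom.ker_isMaximal_of_surjective _ (fun c => ⟨C c, eval_C _⟩)
        have heq := hImax.eq_of_le hkermax.ne_top hklt
        have : X 0 - C (wv w0 0) ∈ I := by
          rw [heq, RingHom.mem_ker]
          simp
        rw [hI] at this
        exact not_dvd_X0 hirr hX hY (wv w0 0) this
      obtain ⟨w', hw'⟩ := prime_classify hirr hX hY hQmax.isPrime hpQ hQne
      have hw'p : eval w' p = 0 := by
        have : p ∈ RingHom.ker (eval w' : MvPolynomial (Fin 2) k →+* k) := hw' ▸ hpQ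
        exact this
      have hwfun : (![w' 0, w' 1] : Fin 2 → k) = w' := by
        funext j; fin_cases j <;> simp
      set v : {z : k × k // eval ![z.1, z.2] p = 0} :=
        ⟨(w' 0, w' 1), by simpa [hwfun] using hw'p⟩ with hv
      have hwvv : wv v = w' := by
        rw [hwv]
        simpa [hv] using hwfun
      have hJv : J = m v := by
        apply Ideal.comap_injective_of_surjective mkq Ideal.Quotient.mk_surjective
        rw [← hQd, hw', hcomap v, hwvv]
      have hevz : ev v (∏ c ∈ T.image cd, (mkq (X i) - mkq (C c))) = 0 := by
        have : (∏ c ∈ T.image cd, (mkq (X i) - mkq (C c))) ∈ m v := hJv ▸ hFJ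
        exact this
      rw [map_prod] at hevz
      have hevz' : ∃ c ∈ T.image cd, ev v (mkq (X i) - mkq (C c)) = 0 :=
        Finset.prod_eq_zero_iff.mp hevz
      obtain ⟨c, hcT, hc0⟩ := hevz'
      obtain ⟨w, hwT, rfl⟩ := Finset.mem_image.mp hcT
      have hvw : wv v i = cd w := by
        rw [hfac, hmk, map_sub, eval_X, eval_C, sub_eq_zero] at hc0
        exact hc0
      have hvT : v ∈ T := by
        refine horbcl v w hwT ?_
        rw [hcd w] at hvw
        have hi : i = 0 ∨ i = 1 := by omega
        rcases hi with rfl | rfl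
        · left
          have h1 : wv v 0 = v.1.1 := by rw [hwv]; simp
          have h2 : wv w 0 = w.1.1 := by rw [hwv]; simp
          rw [← h1, ← h2]; exact hvw
        · right
          have h1 : wv v 1 = v.1.2 := by rw [hwv]; simp
          have h2 : wv w 1 = w.1.2 := by rw [hwv]; simp
          rw [← h1, ← h2]; exact hvw
      exact hJ ⟨v, hvT, hJv⟩
  -- final assembly
  have halg : ∀ c : k, algebraMap k (MvPolynomial (Fin 2) k ⧸ I) c = mkq (C c) := by
    intro c
    rw [hmkq]
    rfl
  simp only [halg]
  have hfacne : ∀ (i : Fin 2) (c : k), mkq (X i) - mkq (C c) ≠ 0 := by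
    intro i c
    rw [show mkq (X i) - mkq (C c) = mkq (X i - C c) from (map_sub mkq _ _).symm,
      hmkq, Ne, Ideal.Quotient.eq_zero_iff_mem]
    have hi : i = 0 ∨ i = 1 := by omega
    rcases hi with rfl | rfl
    · exact not_dvd_X0 hirr hX hY c
    · exact not_dvd_X1 hirr hX hY c
  have hF := main 0 (fun w => w.1.1) (by intro w; rw [hwv]; simp)
  have hG := main 1 (fun w => w.1.2) (by intro w; rw [hwv]; simp)
  have hFne : (∏ c ∈ T.image (fun w => w.1.1), (mkq (X 0) - mkq (C c))) ≠ 0 :=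
    Finset.prod_ne_zero_iff.mpr fun c _ => hfacne 0 c
  have hGne : (∏ c ∈ T.image (fun w => w.1.2), (mkq (X 1) - mkq (C c))) ≠ 0 :=
    Finset.prod_ne_zero_iff.mpr fun c _ => hfacne 1 c
  have hsF : Ideal.span {∏ c ∈ T.image (fun w => w.1.1), (mkq (X 0) - mkq (C c))} ≠ 0 := by
    rw [Ne, Ideal.zero_eq_bot, Ideal.span_singleton_eq_bot]
    exact hFne
  have hsG : Ideal.span {∏ c ∈ T.image (fun w => w.1.2), (mkq (X 1) - mkq (C c))} ≠ 0 := by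
    rw [Ne, Ideal.zero_eq_bot, Ideal.span_singleton_eq_bot]
    exact hGne
  have h1 := prod_normalizedFactors (α := Ideal (MvPolynomial (Fin 2) k ⧸ I)) hsF
  have h2 := prod_normalizedFactors (α := Ideal (MvPolynomial (Fin 2) k ⧸ I)) hsG
  rw [hF] at h1
  rw [hG] at h2
  have hFGspan : Ideal.span {∏ c ∈ T.image (fun w => w.1.1), (mkq (X 0) - mkq (C c))}
      = Ideal.span {∏ c ∈ T.image (fun w => w.1.2), (mkq (X 1) - mkq (C c))} :=
    associated_iff_eq.mp (h1.symm.trans h2)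
  have hassoc : Associated (∏ c ∈ T.image (fun w => w.1.1), (mkq (X 0) - mkq (C c)))
      (∏ c ∈ T.image (fun w => w.1.2), (mkq (X 1) - mkq (C c))) :=
    Ideal.span_singleton_eq_span_singleton.mp hFGspan
  obtain ⟨u, hu⟩ := hassoc
  refine ⟨u⁻¹, ?_⟩
  rw [← hu, mul_comm ((u⁻¹ : (MvPolynomial (Fin 2) k ⧸ I)ˣ) :
    (MvPolynomial (Fin 2) k ⧸ I)) _, mul_assoc, Units.mul_inv, mul_one]
end

section
/- Let k be an algebraically closed field of characteristic zero, p ∈ k[X,Y] irreducible with p ∉ k[X] and p ∉ k[Y], and A = k[X,Y]/⟨p⟩ its coordinate ring with x, y the images of X, Y. Let (α,β) ∈ k² satisfy p(α,β) = 0, and let m be the ideal of A generated by x−α and y−β. Then: (1) m is a maximal ideal of A; (2) if (∂p/∂Y)(α,β) ≠ 0, then the maximal ideal of the localization A_m is generated by the image of x−α; (3) if (∂p/∂X)(α,β) ≠ 0, then the maximal ideal of A_m is generated by the image of y−β. -/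
open MvPolynomial

/-- Taylor expansion to first order: the remainder lies in `M ^ 2`. -/
lemma taylor_aux {k : Type*} [Field k] (α β : k) (q : MvPolynomial (Fin 2) k) :
    q - (C (eval ![α, β] q) + C (eval ![α, β] (pderiv 0 q)) * (X 0 - C α)
        + C (eval ![α, β] (pderiv 1 q)) * (X 1 - C β)) ∈
      (Ideal.span {X 0 - C α, X 1 - C β} : Ideal (MvPolynomial (Fin 2) k)) ^ 2 := by
  set M : Ideal (MvPolynomial (Fin 2) k) := Ideal.span {X 0 - C α, X 1 - C β} with hM
  have hg0 : (X 0 - C α : MvPolynomial (Fin 2) k) ∈ M := Ideal.subset_span (by simp)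
  have hg1 : (X 1 - C β : MvPolynomial (Fin 2) k) ∈ M := Ideal.subset_span (by simp)
  have hmul : ∀ a b : MvPolynomial (Fin 2) k, a ∈ M → b ∈ M → a * b ∈ M ^ 2 := by
    intro a b ha hb
    rw [sq]
    exact Ideal.mul_mem_mul ha hb
  induction q using MvPolynomial.induction_on with
  | C a => simp
  | add q r hq hr =>
      have h := Ideal.add_mem _ hq hr
      convert h using 1
      simp only [map_add]
      ring
  | mul_X q i hq =>
      fin_cases i
      · have key : q * X 0 - (C (eval ![α, β] (q * X 0))
            + C (eval ![α, β] (pderiv 0 (q * X 0))) * (X 0 - C α)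
            + C (eval ![α, β] (pderiv 1 (q * X 0))) * (X 1 - C β))
          = X 0 * (q - (C (eval ![α, β] q) + C (eval ![α, β] (pderiv 0 q)) * (X 0 - C α)
              + C (eval ![α, β] (pderiv 1 q)) * (X 1 - C β)))
            + C (eval ![α, β] (pderiv 0 q)) * ((X 0 - C α) * (X 0 - C α))
            + C (eval ![α, β] (pderiv 1 q)) * ((X 1 - C β) * (X 0 - C α)) := by
          simp only [pderiv_mul, pderiv_X_self, pderiv_X_of_ne (by decide : (0 : Fin 2) ≠ 1),
            map_add, map_mul, map_one, map_zero, eval_X, Matrix.cons_val_zero,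
            Matrix.cons_val_one, Matrix.head_cons, mul_one, mul_zero, add_zero]
          ring
        rw [show (⟨0, by omega⟩ : Fin 2) = 0 from rfl, key]
        exact add_mem (add_mem (Ideal.mul_mem_left _ _ hq)
          (Ideal.mul_mem_left _ _ (hmul _ _ hg0 hg0)))
          (Ideal.mul_mem_left _ _ (hmul _ _ hg1 hg0))
      · have key : q * X 1 - (C (eval ![α, β] (q * X 1))
            + C (eval ![α, β] (pderiv 0 (q * X 1))) * (X 0 - C α)
            + C (eval ![α, β] (pderiv 1 (q * X 1))) * (X 1 - C β))
          = X 1 * (q - (C (eval ![α, β] q) + C (eval ![α, β] (pderiv 0 q)) * (X 0 - C α)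
              + C (eval ![α, β] (pderiv 1 q)) * (X 1 - C β)))
            + C (eval ![α, β] (pderiv 0 q)) * ((X 0 - C α) * (X 1 - C β))
            + C (eval ![α, β] (pderiv 1 q)) * ((X 1 - C β) * (X 1 - C β)) := by
          simp only [pderiv_mul, pderiv_X_self, pderiv_X_of_ne (by decide : (1 : Fin 2) ≠ 0),
            map_add, map_mul, map_one, map_zero, eval_X, Matrix.cons_val_zero,
            Matrix.cons_val_one, Matrix.head_cons, mul_one, mul_zero, add_zero]
          ring
        rw [show (⟨1, by omega⟩ : Fin 2) = 1 from rfl, key]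
        exact add_mem (add_mem (Ideal.mul_mem_left _ _ hq)
          (Ideal.mul_mem_left _ _ (hmul _ _ hg0 hg1)))
          (Ideal.mul_mem_left _ _ (hmul _ _ hg1 hg1))

/-- Extract the generator relation: if the Taylor remainder lies in `M ^ 2`,
then `(C c1 + t) * g1 ∈ span {g0, p}` for some `t ∈ M`. -/
lemma half_aux {k : Type*} [Field k] (v : Fin 2 → k) (p g0 g1 : MvPolynomial (Fin 2) k)
    (c0 c1 : k) (hg0 : eval v g0 = 0) (hg1 : eval v g1 = 0)
    (htay : p - (C (eval v p) + C c0 * g0 + C c1 * g1) ∈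
      (Ideal.span {g0, g1} : Ideal (MvPolynomial (Fin 2) k)) ^ 2)
    (hp : eval v p = 0) :
    ∃ f : MvPolynomial (Fin 2) k, eval v f = c1 ∧ f * g1 ∈ Ideal.span {g0, p} := by
  set M : Ideal (MvPolynomial (Fin 2) k) := Ideal.span {g0, g1} with hM
  have hker : ∀ q ∈ M, eval v q = 0 := by
    intro q hq
    have hle : M ≤ RingHom.ker (eval v) := by
      rw [hM, Ideal.span_le]
      rintro x (rfl | rfl) <;> simp [RingHom.mem_ker, hg0, hg1]
    simpa [RingHom.mem_ker] using hle hq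
  have hsq : M ^ 2 ≤ Ideal.span {g0} ⊔ M * Ideal.span {g1} := by
    rw [sq]
    calc M * M = M * Ideal.span {g0} ⊔ M * Ideal.span {g1} := by
          rw [← Ideal.mul_sup, hM, Ideal.span_insert]
      _ ≤ Ideal.span {g0} ⊔ M * Ideal.span {g1} :=
          sup_le_sup_right Ideal.mul_le_right _
  obtain ⟨u, hu, z, hz, huz⟩ := Submodule.mem_sup.mp (hsq htay)
  obtain ⟨t, htM, htz⟩ := Ideal.mem_mul_span_singleton.mp hz
  refine ⟨C c1 + t, by simp [hker t htM], ?_⟩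
  have hC0 : (C (eval v p) : MvPolynomial (Fin 2) k) = 0 := by rw [hp, map_zero]
  have key : (C c1 + t) * g1 = p - C c0 * g0 - u := by
    linear_combination huz + htz - hC0
  rw [key]
  refine sub_mem (sub_mem (Ideal.subset_span (by simp)) ?_) ?_
  · exact Ideal.mul_mem_left _ _ (Ideal.subset_span (by simp))
  · exact Ideal.span_mono (by simp) hu

/-- The localization step. -/
lemma loc_gen {R : Type*} [CommRing R] (m : Ideal R) [m.IsPrime] (a b f : R)
    (hm : m = Ideal.span {a, b}) (hf : f ∉ m) (hfb : f * b ∈ Ideal.span {a}) :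
    IsLocalRing.maximalIdeal (Localization.AtPrime m) =
      Ideal.span {algebraMap R (Localization.AtPrime m) a} := by
  have hmax := Localization.AtPrime.map_eq_maximalIdeal (I := m)
  have h3 : Ideal.map (algebraMap R (Localization.AtPrime m)) m
      = Ideal.span {algebraMap R (Localization.AtPrime m) a,
          algebraMap R (Localization.AtPrime m) b} :=
    (congrArg _ hm).trans (by rw [Ideal.map_span, Set.image_pair])
  rw [← hmax, h3]
  have hbmem : algebraMap R (Localization.AtPrime m) b ∈
      Ideal.span {algebraMap R (Localization.AtPrime m) a} := by
    have h1 : algebraMap R (Localization.AtPrime m) (f * b) ∈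
        Ideal.span {algebraMap R (Localization.AtPrime m) a} := by
      have := Ideal.mem_map_of_mem (algebraMap R (Localization.AtPrime m)) hfb
      rwa [Ideal.map_span, Set.image_singleton] at this
    obtain ⟨u, hu⟩ := IsLocalization.map_units (Localization.AtPrime m)
      (⟨f, hf⟩ : m.primeCompl)
    have h2 : algebraMap R (Localization.AtPrime m) b
        = ↑u⁻¹ * algebraMap R (Localization.AtPrime m) (f * b) := by
      rw [map_mul, ← hu, Units.inv_mul_cancel_left]
    rw [h2]
    exact Ideal.mul_mem_left _ _ h1
  refine le_antisymm ?_ (Ideal.span_mono (by simp))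
  rw [Ideal.span_insert]
  exact sup_le le_rfl ((Ideal.span_singleton_le_iff_mem _).mpr hbmem)

set_option maxHeartbeats 1000000 in
set_option synthInstance.maxHeartbeats 400000 in
theorem stmt_4 {k : Type*} [Field k] [IsAlgClosed k] [CharZero k]
    (p : MvPolynomial (Fin 2) k) (hirr : Irreducible p)
    (hX : p ∉ supported k ({0} : Set (Fin 2)))
    (hY : p ∉ supported k ({1} : Set (Fin 2)))
    (α β : k) (hp : eval ![α, β] p = 0)
    (m : Ideal (MvPolynomial (Fin 2) k ⧸ Ideal.span {p}))
    (hm : m = Ideal.span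
      {Ideal.Quotient.mk (Ideal.span {p}) (X 0) -
          algebraMap k (MvPolynomial (Fin 2) k ⧸ Ideal.span {p}) α,
        Ideal.Quotient.mk (Ideal.span {p}) (X 1) -
          algebraMap k (MvPolynomial (Fin 2) k ⧸ Ideal.span {p}) β}) :
    ∃ hmax : m.IsMaximal,
      haveI : m.IsPrime := hmax.isPrime
      (eval ![α, β] (pderiv 1 p) ≠ 0 →
        IsLocalRing.maximalIdeal (Localization.AtPrime m) =
          Ideal.span {algebraMap (MvPolynomial (Fin 2) k ⧸ Ideal.span {p})
            (Localization.AtPrime m)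
            (Ideal.Quotient.mk (Ideal.span {p}) (X 0) -
              algebraMap k (MvPolynomial (Fin 2) k ⧸ Ideal.span {p}) α)}) ∧
      (eval ![α, β] (pderiv 0 p) ≠ 0 →
        IsLocalRing.maximalIdeal (Localization.AtPrime m) =
          Ideal.span {algebraMap (MvPolynomial (Fin 2) k ⧸ Ideal.span {p})
            (Localization.AtPrime m)
            (Ideal.Quotient.mk (Ideal.span {p}) (X 1) -
              algebraMap k (MvPolynomial (Fin 2) k ⧸ Ideal.span {p}) β)}) := by
  have hg0ev : eval ![α, β] (X 0 - C α : MvPolynomial (Fin 2) k) = 0 := by simp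
  have hg1ev : eval ![α, β] (X 1 - C β : MvPolynomial (Fin 2) k) = 0 := by simp
  have hker : ∀ q ∈ (Ideal.span {X 0 - C α, X 1 - C β} : Ideal (MvPolynomial (Fin 2) k)),
      eval ![α, β] q = 0 := by
    intro q hq
    have hle : (Ideal.span {X 0 - C α, X 1 - C β} : Ideal (MvPolynomial (Fin 2) k)) ≤
        RingHom.ker (eval ![α, β]) := by
      rw [Ideal.span_le]
      rintro x (rfl | rfl) <;> simp [RingHom.mem_ker, hg0ev, hg1ev]
    simpa [RingHom.mem_ker] using hle hq
  have hg0M : (X 0 - C α : MvPolynomial (Fin 2) k)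
      ∈ (Ideal.span {X 0 - C α, X 1 - C β} : Ideal (MvPolynomial (Fin 2) k)) :=
    Ideal.subset_span (by simp)
  have hg1M : (X 1 - C β : MvPolynomial (Fin 2) k)
      ∈ (Ideal.span {X 0 - C α, X 1 - C β} : Ideal (MvPolynomial (Fin 2) k)) :=
    Ideal.subset_span (by simp)
  -- M = kernel of evaluation, hence maximal
  have hMk : (Ideal.span {X 0 - C α, X 1 - C β} : Ideal (MvPolynomial (Fin 2) k))
      = RingHom.ker (eval (![α, β] : Fin 2 → k)) := by
    refine le_antisymm ?_ ?_
    · rw [Ideal.span_le]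
      rintro x (rfl | rfl) <;> simp [RingHom.mem_ker, hg0ev, hg1ev]
    · intro q hq
      rw [RingHom.mem_ker] at hq
      have hT : C (eval ![α, β] q) + C (eval ![α, β] (pderiv 0 q)) * (X 0 - C α)
          + C (eval ![α, β] (pderiv 1 q)) * (X 1 - C β)
          ∈ (Ideal.span {X 0 - C α, X 1 - C β} : Ideal (MvPolynomial (Fin 2) k)) := by
        refine add_mem (add_mem ?_ (Ideal.mul_mem_left _ _ hg0M)) (Ideal.mul_mem_left _ _ hg1M)
        rw [hq, map_zero]; exact zero_mem _
      have heq : q = (q - (C (eval ![α, β] q) + C (eval ![α, β] (pderiv 0 q)) * (X 0 - C α)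
          + C (eval ![α, β] (pderiv 1 q)) * (X 1 - C β)))
          + (C (eval ![α, β] q) + C (eval ![α, β] (pderiv 0 q)) * (X 0 - C α)
          + C (eval ![α, β] (pderiv 1 q)) * (X 1 - C β)) := by ring
      rw [heq]
      exact add_mem (Ideal.pow_le_self two_ne_zero (taylor_aux α β q)) hT
  have hsurj : Function.Surjective (eval (![α, β] : Fin 2 → k)) :=
    fun c => ⟨C c, by simp⟩
  have hMmax : (Ideal.span {X 0 - C α, X 1 - C β} : Ideal (MvPolynomial (Fin 2) k)).IsMaximal :=
    hMk ▸ RingHom.ker_isMaximal_of_surjective _ hsurj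
  have hpM : p ∈ (Ideal.span {X 0 - C α, X 1 - C β} : Ideal (MvPolynomial (Fin 2) k)) := by
    rw [hMk, RingHom.mem_ker]; exact hp
  -- the generators of m
  have hgen0 : Ideal.Quotient.mk (Ideal.span {p}) (X 0 - C α)
      = Ideal.Quotient.mk (Ideal.span {p}) (X 0) -
          algebraMap k (MvPolynomial (Fin 2) k ⧸ Ideal.span {p}) α := by
    rw [map_sub, ← MvPolynomial.algebraMap_eq, Ideal.Quotient.mk_algebraMap]
  have hgen1 : Ideal.Quotient.mk (Ideal.span {p}) (X 1 - C β)
      = Ideal.Quotient.mk (Ideal.span {p}) (X 1) -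
          algebraMap k (MvPolynomial (Fin 2) k ⧸ Ideal.span {p}) β := by
    rw [map_sub, ← MvPolynomial.algebraMap_eq, Ideal.Quotient.mk_algebraMap]
  have hmAB : m = Ideal.span {Ideal.Quotient.mk (Ideal.span {p}) (X 0 - C α),
      Ideal.Quotient.mk (Ideal.span {p}) (X 1 - C β)} := by
    rw [hm, hgen0, hgen1]
  have hmm : m = Ideal.map (Ideal.Quotient.mk (Ideal.span {p}))
      (Ideal.span {X 0 - C α, X 1 - C β}) := by
    rw [hmAB, Ideal.map_span, Set.image_pair]
  have hIleM : Ideal.span {p} ≤ (Ideal.span {X 0 - C α, X 1 - C β} :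
      Ideal (MvPolynomial (Fin 2) k)) := by
    rw [Ideal.span_le]; simpa using hpM
  have hcomap : Ideal.comap (Ideal.Quotient.mk (Ideal.span {p}))
      (Ideal.map (Ideal.Quotient.mk (Ideal.span {p})) (Ideal.span {X 0 - C α, X 1 - C β}))
      = Ideal.span {X 0 - C α, X 1 - C β} := by
    rw [Ideal.comap_map_of_surjective _ Ideal.Quotient.mk_surjective,
      ← RingHom.ker_eq_comap_bot, Ideal.mk_ker, sup_eq_left.mpr hIleM]
  have hmax : m.IsMaximal := by
    rcases Ideal.map_eq_top_or_isMaximal_of_surjective (Ideal.Quotient.mk (Ideal.span {p}))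
      Ideal.Quotient.mk_surjective hMmax with h | h
    · exfalso
      apply hMmax.ne_top
      rw [← hcomap, h, Ideal.comap_top]
    · rwa [hmm]
  haveI : m.IsPrime := hmax.isPrime
  have hnotmem : ∀ f : MvPolynomial (Fin 2) k, eval ![α, β] f ≠ 0 →
      Ideal.Quotient.mk (Ideal.span {p}) f ∉ m := by
    intro f hf hmem
    rw [hmm] at hmem
    have hfM : f ∈ Ideal.comap (Ideal.Quotient.mk (Ideal.span {p}))
        (Ideal.map (Ideal.Quotient.mk (Ideal.span {p}))
          (Ideal.span {X 0 - C α, X 1 - C β})) := hmem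
    rw [hcomap] at hfM
    exact hf (hker f hfM)
  have hmkp : Ideal.Quotient.mk (Ideal.span {p}) p = 0 :=
    Ideal.Quotient.eq_zero_iff_mem.mpr (Ideal.mem_span_singleton_self p)
  refine ⟨hmax, ?_, ?_⟩
  · -- pderiv 1 p ≠ 0 case
    intro hd
    obtain ⟨f, hfev, hfmem⟩ := half_aux ![α, β] p (X 0 - C α) (X 1 - C β)
      (eval ![α, β] (pderiv 0 p)) (eval ![α, β] (pderiv 1 p)) hg0ev hg1ev (taylor_aux α β p) hp
    have hfnot := hnotmem f (by rw [hfev]; exact hd)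
    have hAmem : Ideal.Quotient.mk (Ideal.span {p}) f *
        Ideal.Quotient.mk (Ideal.span {p}) (X 1 - C β) ∈
        Ideal.span {Ideal.Quotient.mk (Ideal.span {p}) (X 0 - C α)} := by
      rw [← map_mul]
      have h := Ideal.mem_map_of_mem (Ideal.Quotient.mk (Ideal.span {p})) hfmem
      rw [Ideal.map_span, Set.image_pair, hmkp] at h
      simpa [Ideal.span_insert, Ideal.span_zero, Set.singleton_zero] using h
    rw [← hgen0]
    exact loc_gen m _ _ _ hmAB hfnot hAmem
  · -- pderiv 0 p ≠ 0 case
    intro hd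
    have htay' : p - (C (eval ![α, β] p) + C (eval ![α, β] (pderiv 1 p)) * (X 1 - C β)
        + C (eval ![α, β] (pderiv 0 p)) * (X 0 - C α)) ∈
        (Ideal.span {X 1 - C β, X 0 - C α} : Ideal (MvPolynomial (Fin 2) k)) ^ 2 := by
      have heq : p - (C (eval ![α, β] p) + C (eval ![α, β] (pderiv 1 p)) * (X 1 - C β)
          + C (eval ![α, β] (pderiv 0 p)) * (X 0 - C α))
          = p - (C (eval ![α, β] p) + C (eval ![α, β] (pderiv 0 p)) * (X 0 - C α)
          + C (eval ![α, β] (pderiv 1 p)) * (X 1 - C β)) := by ring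
      rw [heq, Set.pair_comm (X 1 - C β : MvPolynomial (Fin 2) k) (X 0 - C α)]
      exact taylor_aux α β p
    obtain ⟨f, hfev, hfmem⟩ := half_aux ![α, β] p (X 1 - C β) (X 0 - C α)
      (eval ![α, β] (pderiv 1 p)) (eval ![α, β] (pderiv 0 p)) hg1ev hg0ev htay' hp
    have hfnot := hnotmem f (by rw [hfev]; exact hd)
    have hAmem : Ideal.Quotient.mk (Ideal.span {p}) f *
        Ideal.Quotient.mk (Ideal.span {p}) (X 0 - C α) ∈
        Ideal.span {Ideal.Quotient.mk (Ideal.span {p}) (X 1 - C β)} := by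
      rw [← map_mul]
      have h := Ideal.mem_map_of_mem (Ideal.Quotient.mk (Ideal.span {p})) hfmem
      rw [Ideal.map_span, Set.image_pair, hmkp] at h
      simpa [Ideal.span_insert, Ideal.span_zero, Set.singleton_zero] using h
    have hmBA : m = Ideal.span {Ideal.Quotient.mk (Ideal.span {p}) (X 1 - C β),
        Ideal.Quotient.mk (Ideal.span {p}) (X 0 - C α)} := by
      rw [hmAB, Set.pair_comm]
    rw [← hgen1]
    exact loc_gen m _ _ _ hmBA hfnot hAmem
end

section
/- Let k be an algebraically closed field of characteristic zero and let p = XY − X²Y − XY² − 1 ∈ k[X,Y]. Then p is irreducible in k[X,Y], and in the fraction field F of A = k[X,Y]/⟨p⟩ one has the identity (1 + x² − x³)/x = (1 + y² − y³)/y; moreover the intersection of the intermediate fields k(x) and k(y) of F/k equals the intermediate field k((1 + x² − x³)/x) generated over k by (1 + x² − x³)/x. In particular k(x) ∩ k(y) ≠ k. -/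
namespace Stmt5Aux
open Polynomial

variable {k : Type*} [Field k]

/-- The image of `p` in `(k[X])[Y]`: `-X·Y² + (X - X²)·Y - 1`. -/
noncomputable def Q (k : Type*) [Field k] : Polynomial (Polynomial k) :=
  C (-X) * X ^ 2 + C (X - X ^ 2) * X + C (-1)

noncomputable def auxEquiv (k : Type*) [Field k] :
    MvPolynomial (Fin 2) k ≃ₐ[k] Polynomial (Polynomial k) :=
  (MvPolynomial.finSuccEquiv k 1).trans <|
    Polynomial.mapAlgEquiv <|
      (MvPolynomial.finSuccEquiv k 0).trans <|
        Polynomial.mapAlgEquiv (MvPolynomial.isEmptyAlgEquiv k (Fin 0))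


lemma qcoeff0 {R : Type*} [CommRing R] (a b c : R) :
    (C a * X ^ 2 + C b * X + C c).coeff 0 = c := by simp [coeff_X_pow]

lemma qcoeff1 {R : Type*} [CommRing R] (a b c : R) :
    (C a * X ^ 2 + C b * X + C c).coeff 1 = b := by simp [coeff_X_pow]

lemma qcoeff2 {R : Type*} [CommRing R] (a b c : R) :
    (C a * X ^ 2 + C b * X + C c).coeff 2 = a := by simp [coeff_X_pow]

lemma Q_natDegree : (Q k).natDegree = 2 :=
  natDegree_quadratic (by simp [X_ne_zero])

lemma Q_ne_zero : (Q k) ≠ 0 := by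
  intro h
  have h2 : (Q k).coeff 0 = -1 := qcoeff0 _ _ _
  rw [h] at h2
  simp at h2

lemma unit_of_deg0 (f g : Polynomial (Polynomial k)) (hfg : Q k = f * g)
    (h0 : f.natDegree = 0) : IsUnit f := by
  have hc : f.coeff 0 * g.coeff 0 = -1 := by
    have h := congrArg (fun q => q.coeff 0) hfg
    simp only [Q, qcoeff0, mul_coeff_zero] at h
    exact h.symm
  have hu : IsUnit (f.coeff 0) :=
    IsUnit.of_mul_eq_one (-(g.coeff 0)) (by rw [mul_neg, hc, neg_neg])
  rw [eq_C_of_natDegree_eq_zero h0]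
  exact hu.map C

lemma Q_irreducible : Irreducible (Q k) := by
  constructor
  · intro hu
    have h := natDegree_eq_zero_of_isUnit hu
    rw [Q_natDegree] at h
    omega
  · intro f g hfg
    have hf0 : f ≠ 0 := by rintro rfl; rw [zero_mul] at hfg; exact Q_ne_zero hfg
    have hg0 : g ≠ 0 := by rintro rfl; rw [mul_zero] at hfg; exact Q_ne_zero hfg
    have hsum : f.natDegree + g.natDegree = 2 := by
      rw [← natDegree_mul hf0 hg0, ← hfg, Q_natDegree]
    rcases Nat.eq_zero_or_pos f.natDegree with hfd | hfd
    · exact Or.inl (unit_of_deg0 f g hfg hfd)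
    rcases Nat.eq_zero_or_pos g.natDegree with hgd | hgd
    · exact Or.inr (unit_of_deg0 g f (by rw [hfg, mul_comm]) hgd)
    -- both degree 1
    have hfd1 : f.natDegree = 1 := by omega
    have hgd1 : g.natDegree = 1 := by omega
    exfalso
    set a1 := f.coeff 1 with ha1d
    set a0 := f.coeff 0 with ha0d
    set b1 := g.coeff 1 with hb1d
    set b0 := g.coeff 0 with hb0d
    have hf : f = C a1 * X + C a0 := eq_X_add_C_of_natDegree_le_one (by omega)
    have hg : g = C b1 * X + C b0 := eq_X_add_C_of_natDegree_le_one (by omega)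
    have hprod : Q k = C (a1 * b1) * X ^ 2 + C (a1 * b0 + a0 * b1) * X + C (a0 * b0) := by
      rw [hfg, hf, hg]
      simp only [map_mul, map_add]
      ring
    have e0 : (-1 : Polynomial k) = a0 * b0 := by
      have h := congrArg (fun q => q.coeff 0) hprod
      simpa only [Q, qcoeff0] using h
    have e1 : (X : Polynomial k) - X ^ 2 = a1 * b0 + a0 * b1 := by
      have h := congrArg (fun q => q.coeff 1) hprod
      simpa only [Q, qcoeff1] using h
    have e2 : (-X : Polynomial k) = a1 * b1 := by
      have h := congrArg (fun q => q.coeff 2) hprod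
      simpa only [Q, qcoeff2] using h
    have ha1 : a1 ≠ 0 := by rintro h; rw [h, zero_mul] at e2; simpa [X_ne_zero] using e2
    have hb1 : b1 ≠ 0 := by rintro h; rw [h, mul_zero] at e2; simpa [X_ne_zero] using e2
    have ha0 : a0 ≠ 0 := by rintro h; rw [h, zero_mul] at e0; simpa using e0
    have hb0 : b0 ≠ 0 := by rintro h; rw [h, mul_zero] at e0; simpa using e0
    have hd2 : a1.natDegree + b1.natDegree = 1 := by
      rw [← natDegree_mul ha1 hb1, ← e2, natDegree_neg, natDegree_X]
    have hd0 : a0.natDegree + b0.natDegree = 0 := by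
      rw [← natDegree_mul ha0 hb0, ← e0]
      simp
    have hlhs : ((X : Polynomial k) - X ^ 2).natDegree = 2 := by
      have : (X : Polynomial k) - X ^ 2 = C (-1 : k) * X ^ 2 + C 1 * X + C 0 := by
        simp only [map_neg, map_one, map_zero]
        ring
      rw [this]
      exact natDegree_quadratic (by norm_num)
    have hrhs : (a1 * b0 + a0 * b1).natDegree ≤ 1 := by
      refine (natDegree_add_le _ _).trans ?_
      have h1 : (a1 * b0).natDegree ≤ 1 := (natDegree_mul_le).trans (by omega)
      have h2 : (a0 * b1).natDegree ≤ 1 := (natDegree_mul_le).trans (by omega)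
      omega
    rw [e1] at hlhs
    omega

/-- The key "no rational root" lemma. -/
lemma noRoot : ∀ (n : ℕ) (f g : Polynomial k), g ≠ 0 → g.natDegree ≤ n →
    X * f ^ 2 + g ^ 2 = (X - X ^ 2) * f * g → False := by
  intro n
  induction n with
  | zero =>
    intro f g hg hdeg h
    have hXg : (X : Polynomial k) ∣ g := by
      apply Polynomial.prime_X.dvd_of_dvd_pow (n := 2)
      exact ⟨(1 - X) * f * g - f ^ 2, by linear_combination h⟩
    obtain ⟨g1, rfl⟩ := hXg
    have hg1 : g1 ≠ 0 := right_ne_zero_of_mul hg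
    have : (X * g1).natDegree = g1.natDegree + 1 := by
      rw [natDegree_mul X_ne_zero hg1, natDegree_X]; omega
    omega
  | succ n ih =>
    intro f g hg hdeg h
    have hXg : (X : Polynomial k) ∣ g := by
      apply Polynomial.prime_X.dvd_of_dvd_pow (n := 2)
      exact ⟨(1 - X) * f * g - f ^ 2, by linear_combination h⟩
    obtain ⟨g1, rfl⟩ := hXg
    have hg1 : g1 ≠ 0 := right_ne_zero_of_mul hg
    have h3 : f ^ 2 + X * g1 ^ 2 = (X - X ^ 2) * f * g1 := by
      apply mul_left_cancel₀ (X_ne_zero (R := k))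
      linear_combination h
    have hXf : (X : Polynomial k) ∣ f := by
      apply Polynomial.prime_X.dvd_of_dvd_pow (n := 2)
      exact ⟨(1 - X) * f * g1 - g1 ^ 2, by linear_combination h3⟩
    obtain ⟨f1, rfl⟩ := hXf
    have h4 : X * f1 ^ 2 + g1 ^ 2 = (X - X ^ 2) * f1 * g1 := by
      apply mul_left_cancel₀ (X_ne_zero (R := k))
      linear_combination h3
    apply ih f1 g1 hg1 ?_ h4
    have : (X * g1).natDegree = g1.natDegree + 1 := by
      rw [natDegree_mul X_ne_zero hg1, natDegree_X]; omega
    omega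

lemma auxEquiv_X0 : auxEquiv k (MvPolynomial.X 0) = X := by
  simp [auxEquiv, MvPolynomial.finSuccEquiv_X_zero]

lemma auxEquiv_X1 : auxEquiv k (MvPolynomial.X 1) = C X := by
  have h1 : (1 : Fin 2) = Fin.succ 0 := rfl
  rw [auxEquiv, AlgEquiv.trans_apply, h1, MvPolynomial.finSuccEquiv_X_succ,
    coe_mapAlgEquiv, map_C]
  simp [MvPolynomial.finSuccEquiv_X_zero]

lemma auxEquiv_p {p : MvPolynomial (Fin 2) k}
    (hp : p = MvPolynomial.X 0 * MvPolynomial.X 1 - MvPolynomial.X 0 ^ 2 * MvPolynomial.X 1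
      - MvPolynomial.X 0 * MvPolynomial.X 1 ^ 2 - 1) :
    auxEquiv k p = Q k := by
  rw [hp]
  simp only [map_sub, map_mul, map_pow, map_one, map_neg, auxEquiv_X0, auxEquiv_X1, Q]
  ring

lemma p_irreducible {p : MvPolynomial (Fin 2) k}
    (hp : p = MvPolynomial.X 0 * MvPolynomial.X 1 - MvPolynomial.X 0 ^ 2 * MvPolynomial.X 1
      - MvPolynomial.X 0 * MvPolynomial.X 1 ^ 2 - 1) :
    Irreducible p := by
  have h := Q_irreducible (k := k)
  rw [← auxEquiv_p hp] at h
  exact (MulEquiv.irreducible_iff (auxEquiv k).toMulEquiv).1 h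

lemma not_dvd_aeval_X1 {p : MvPolynomial (Fin 2) k}
    (hp : p = MvPolynomial.X 0 * MvPolynomial.X 1 - MvPolynomial.X 0 ^ 2 * MvPolynomial.X 1
      - MvPolynomial.X 0 * MvPolynomial.X 1 ^ 2 - 1)
    (f : Polynomial k) (hf : f ≠ 0)
    (h : p ∣ Polynomial.aeval (MvPolynomial.X 1) f) : False := by
  have h2 : Q k ∣ C f := by
    have hd := map_dvd (auxEquiv k).toAlgHom h
    rw [AlgEquiv.toAlgHom_eq_coe] at hd
    change auxEquiv k p ∣ auxEquiv k _ at hd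
    rw [auxEquiv_p hp] at hd
    rw [← Polynomial.aeval_algHom_apply (auxEquiv k), auxEquiv_X1] at hd
    rw [show (C X : Polynomial (Polynomial k)) = (Polynomial.CAlgHom (R := k)) X from rfl,
      Polynomial.aeval_algHom_apply (Polynomial.CAlgHom (R := k)), aeval_X_left_apply] at hd
    exact hd
  have hC : (C f : Polynomial (Polynomial k)) ≠ 0 := by simpa using hf
  have hle := natDegree_le_of_dvd h2 hC
  rw [Q_natDegree, natDegree_C] at hle
  omega

lemma swap_p {p : MvPolynomial (Fin 2) k}
    (hp : p = MvPolynomial.X 0 * MvPolynomial.X 1 - MvPolynomial.X 0 ^ 2 * MvPolynomial.X 1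
      - MvPolynomial.X 0 * MvPolynomial.X 1 ^ 2 - 1) :
    MvPolynomial.rename (Equiv.swap (0 : Fin 2) 1) p = p := by
  rw [hp]
  simp only [map_sub, map_mul, map_pow, map_one, MvPolynomial.rename_X,
    Equiv.swap_apply_left, Equiv.swap_apply_right]
  ring

lemma swap_aeval (f : Polynomial k) :
    MvPolynomial.rename (R := k) (Equiv.swap (0 : Fin 2) 1) (Polynomial.aeval (MvPolynomial.X 0) f)
      = Polynomial.aeval (MvPolynomial.X 1) f := by
  have h := Polynomial.aeval_algHom_apply
    (MvPolynomial.rename (R := k) (Equiv.swap (0 : Fin 2) 1)) (MvPolynomial.X (R := k) 0) f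
  rw [MvPolynomial.rename_X, Equiv.swap_apply_left] at h
  exact h.symm

/-- `x ∉ k(y)` given the relation and transcendence of `y`.  Uses `noRoot`. -/
lemma not_mem_adjoin {k F : Type*} [Field k] [Field F] [Algebra k F] {x y : F}
    (hrel : x * y - x ^ 2 * y - x * y ^ 2 - 1 = 0) (hy : Transcendental k y) :
    x ∉ IntermediateField.adjoin k {y} := by
  intro hmem
  have hx0 : x ≠ 0 := by rintro rfl; simp at hrel
  obtain ⟨f, g, hfg⟩ := (IntermediateField.mem_adjoin_simple_iff k x).1 hmem
  set Fv := Polynomial.aeval y f with hFv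
  set Gv := Polynomial.aeval y g with hGv
  have hGv0 : Gv ≠ 0 := by
    intro h0
    rw [h0, div_zero] at hfg
    exact hx0 hfg
  have hg : g ≠ 0 := by rintro rfl; simp [hGv] at hGv0
  have hx : x * Gv = Fv := by rw [hfg]; field_simp
  have key : y * Fv ^ 2 + Gv ^ 2 = (y - y ^ 2) * Fv * Gv := by
    linear_combination (-(Gv ^ 2)) * hrel + (-(y * (Fv + x * Gv) - (y - y ^ 2) * Gv)) * hx
  have key2 : Polynomial.aeval y
      (X * f ^ 2 + g ^ 2 - (X - X ^ 2) * f * g) = 0 := by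
    simp only [map_add, map_sub, map_mul, map_pow, Polynomial.aeval_X]
    linear_combination key
  have hpoly := transcendental_iff.1 hy _ key2
  have heq : X * f ^ 2 + g ^ 2 = (X - X ^ 2) * f * g := sub_eq_zero.1 hpoly
  exact noRoot g.natDegree f g hg le_rfl heq

lemma not_dvd_aeval_X0 {p : MvPolynomial (Fin 2) k}
    (hp : p = MvPolynomial.X 0 * MvPolynomial.X 1 - MvPolynomial.X 0 ^ 2 * MvPolynomial.X 1
      - MvPolynomial.X 0 * MvPolynomial.X 1 ^ 2 - 1)
    (f : Polynomial k) (hf : f ≠ 0)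
    (h : p ∣ Polynomial.aeval (MvPolynomial.X 0) f) : False := by
  apply not_dvd_aeval_X1 hp f hf
  have h2 := map_dvd (MvPolynomial.rename (R := k) (Equiv.swap (0 : Fin 2) 1)) h
  rwa [swap_p hp, swap_aeval] at h2

end Stmt5Aux

open MvPolynomial

set_option maxHeartbeats 1000000
set_option synthInstance.maxHeartbeats 400000

theorem stmt_5 {k : Type*} [Field k] [IsAlgClosed k] [CharZero k]
    (p : MvPolynomial (Fin 2) k)
    (hp : p = X 0 * X 1 - X 0 ^ 2 * X 1 - X 0 * X 1 ^ 2 - 1)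
    (F : Type*) [Field F]
    [Algebra (MvPolynomial (Fin 2) k ⧸ Ideal.span {p}) F]
    [IsFractionRing (MvPolynomial (Fin 2) k ⧸ Ideal.span {p}) F]
    [Algebra k F]
    [IsScalarTower k (MvPolynomial (Fin 2) k ⧸ Ideal.span {p}) F] :
    Irreducible p ∧
    (letI x := algebraMap (MvPolynomial (Fin 2) k ⧸ Ideal.span {p}) F
        (Ideal.Quotient.mk (Ideal.span {p}) (X 0))
     letI y := algebraMap (MvPolynomial (Fin 2) k ⧸ Ideal.span {p}) F
        (Ideal.Quotient.mk (Ideal.span {p}) (X 1))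
     (1 + x ^ 2 - x ^ 3) / x = (1 + y ^ 2 - y ^ 3) / y ∧
     IntermediateField.adjoin k {x} ⊓ IntermediateField.adjoin k {y} =
        IntermediateField.adjoin k {(1 + x ^ 2 - x ^ 3) / x} ∧
     IntermediateField.adjoin k {x} ⊓ IntermediateField.adjoin k {y} ≠ ⊥) := by
  classical
  have hφ : Function.Injective
      (algebraMap (MvPolynomial (Fin 2) k ⧸ Ideal.span {p}) F) :=
    IsFractionRing.injective _ _
  set x : F := algebraMap (MvPolynomial (Fin 2) k ⧸ Ideal.span {p}) F
      (Ideal.Quotient.mk (Ideal.span {p}) (X 0)) with hxdef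
  set y : F := algebraMap (MvPolynomial (Fin 2) k ⧸ Ideal.span {p}) F
      (Ideal.Quotient.mk (Ideal.span {p}) (X 1)) with hydef
  have hrel : x * y - x ^ 2 * y - x * y ^ 2 - 1 = 0 := by
    have h0 : (Ideal.Quotient.mk (Ideal.span {p}))
        (X 0 * X 1 - X 0 ^ 2 * X 1 - X 0 * X 1 ^ 2 - 1) = 0 := by
      rw [← hp]
      exact Ideal.Quotient.eq_zero_iff_mem.2 (Ideal.mem_span_singleton_self p)
    have h1 := congrArg (algebraMap (MvPolynomial (Fin 2) k ⧸ Ideal.span {p}) F) h0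
    rw [map_zero] at h1
    simp only [map_sub, map_mul, map_pow, map_one] at h1
    exact h1
  have hx0 : x ≠ 0 := fun h => by rw [h] at hrel; simp at hrel
  have hy0 : y ≠ 0 := fun h => by rw [h] at hrel; simp at hrel
  set t : F := (1 + x ^ 2 - x ^ 3) / x with htdef
  have htx : t * x = 1 + x ^ 2 - x ^ 3 := div_mul_cancel₀ _ hx0
  have hid : t = (1 + y ^ 2 - y ^ 3) / y := by
    rw [htdef, div_eq_div_iff hx0 hy0]; linear_combination (x - y) * hrel
  -- transcendence
  have hdvd : ∀ (f : Polynomial k) (i : Fin 2),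
      Polynomial.aeval (algebraMap (MvPolynomial (Fin 2) k ⧸ Ideal.span {p}) F
        (Ideal.Quotient.mk (Ideal.span {p}) (X i))) f = 0 →
      p ∣ Polynomial.aeval (X i) f := by
    intro f i h
    rw [Polynomial.aeval_algebraMap_apply] at h
    have h2 : Polynomial.aeval ((Ideal.Quotient.mk (Ideal.span {p})) (X i)) f = 0 := by
      apply hφ; rw [map_zero]; exact h
    rw [show (Ideal.Quotient.mk (Ideal.span {p})) (X i)
        = Ideal.Quotient.mkₐ k (Ideal.span {p}) (X i) from rfl,
      Polynomial.aeval_algHom_apply (Ideal.Quotient.mkₐ k (Ideal.span {p})),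
      Ideal.Quotient.mkₐ_eq_mk] at h2
    exact Ideal.mem_span_singleton.1 (Ideal.Quotient.eq_zero_iff_mem.1 h2)
  have htrx : Transcendental k x := by
    rintro ⟨f, hf0, hf⟩
    exact Stmt5Aux.not_dvd_aeval_X0 hp f hf0 (hdvd f 0 (by rw [← hxdef]; exact hf))
  have htry : Transcendental k y := by
    rintro ⟨f, hf0, hf⟩
    exact Stmt5Aux.not_dvd_aeval_X1 hp f hf0 (hdvd f 1 (by rw [← hydef]; exact hf))
  have hxny : x ∉ IntermediateField.adjoin k {y} := Stmt5Aux.not_mem_adjoin hrel htry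
  -- memberships of t
  have hxm : x ∈ IntermediateField.adjoin k {x} := IntermediateField.mem_adjoin_simple_self k x
  have hym : y ∈ IntermediateField.adjoin k {y} := IntermediateField.mem_adjoin_simple_self k y
  have ht_x : t ∈ IntermediateField.adjoin k {x} := by
    rw [htdef]
    exact div_mem (sub_mem (add_mem (one_mem _) (pow_mem hxm 2)) (pow_mem hxm 3)) hxm
  have ht_y : t ∈ IntermediateField.adjoin k {y} := by
    rw [hid]
    exact div_mem (sub_mem (add_mem (one_mem _) (pow_mem hym 2)) (pow_mem hym 3)) hym
  have hKtKx : IntermediateField.adjoin k {t} ≤ IntermediateField.adjoin k {x} :=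
    IntermediateField.adjoin_simple_le_iff.2 ht_x
  have hKtKy : IntermediateField.adjoin k {t} ≤ IntermediateField.adjoin k {y} :=
    IntermediateField.adjoin_simple_le_iff.2 ht_y
  have h1 : IntermediateField.adjoin k {t} ≤
      IntermediateField.adjoin k {x} ⊓ IntermediateField.adjoin k {y} := le_inf hKtKx hKtKy
  have h2 : IntermediateField.adjoin k {x} ⊓ IntermediateField.adjoin k {y}
      ≤ IntermediateField.adjoin k {x} := inf_le_left
  -- integrality of x over k(t)
  have htKt : t ∈ IntermediateField.adjoin k {t} := IntermediateField.mem_adjoin_simple_self k t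
  set Kt := IntermediateField.adjoin k {t} with hKtdef
  set τ : Kt := ⟨t, htKt⟩ with hτdef
  set cub : Polynomial Kt := Polynomial.X ^ 3 +
      (Polynomial.C (-1 : Kt) * Polynomial.X ^ 2 + Polynomial.C τ * Polynomial.X
        + Polynomial.C (-1 : Kt)) with hcubdef
  have hmon : cub.Monic := Polynomial.monic_X_pow_add
    (lt_of_le_of_lt Polynomial.degree_quadratic_le (by norm_num))
  have hcubdeg : cub.natDegree = 3 := by
    rw [hcubdef, Polynomial.natDegree_add_eq_left_of_natDegree_lt, Polynomial.natDegree_X_pow]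
    rw [Polynomial.natDegree_X_pow]
    calc (Polynomial.C (-1 : Kt) * Polynomial.X ^ 2 + Polynomial.C τ * Polynomial.X
          + Polynomial.C (-1 : Kt)).natDegree
        ≤ 2 := Polynomial.natDegree_quadratic_le
      _ < 3 := by norm_num
  have haev : Polynomial.aeval x cub = 0 := by
    rw [hcubdef]
    simp only [map_add, map_mul, map_pow, Polynomial.aeval_X, Polynomial.aeval_C, map_neg, map_one]
    have hτx : (algebraMap Kt F) τ = t := rfl
    rw [hτx]
    linear_combination htx
  have hint : IsIntegral Kt x := ⟨cub, hmon, haev⟩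
  have hadj : IntermediateField.extendScalars hKtKx
      = IntermediateField.adjoin Kt {x} := by
    apply le_antisymm
    · rw [IntermediateField.extendScalars_le_iff]
      exact IntermediateField.adjoin_simple_le_iff.2
        (IntermediateField.mem_adjoin_simple_self Kt x)
    · exact IntermediateField.adjoin_simple_le_iff.2
        ((IntermediateField.mem_extendScalars _).2 hxm)
  haveI hFD : FiniteDimensional Kt (IntermediateField.adjoin Kt {x}) :=
    IntermediateField.adjoin.finiteDimensional hint
  have hdXle : IntermediateField.relfinrank Kt (IntermediateField.adjoin k {x}) ≤ 3 := by
    rw [IntermediateField.relfinrank_eq_finrank_of_le hKtKx, hadj,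
      IntermediateField.adjoin.finrank hint]
    have hle := Polynomial.natDegree_le_of_dvd (minpoly.dvd Kt x haev) hmon.ne_zero
    rw [hcubdeg] at hle
    exact hle
  have hdX0 : IntermediateField.relfinrank Kt (IntermediateField.adjoin k {x}) ≠ 0 := by
    rw [IntermediateField.relfinrank_eq_finrank_of_le hKtKx, hadj]
    exact Module.finrank_pos.ne'
  -- the main claim
  have hL : IntermediateField.adjoin k {x} ⊓ IntermediateField.adjoin k {y} = Kt := by
    by_contra hne
    have hmul := IntermediateField.relfinrank_mul_relfinrank h1 h2
    have ha1 : IntermediateField.relfinrank Kt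
        (IntermediateField.adjoin k {x} ⊓ IntermediateField.adjoin k {y}) ≠ 1 := by
      intro ha
      apply hne
      rw [IntermediateField.relfinrank_eq_finrank_of_le h1,
        IntermediateField.finrank_eq_one_iff] at ha
      apply le_antisymm ?_ h1
      intro u hu
      have hu2 : u ∈ (⊥ : IntermediateField Kt F) := ha ▸
        (IntermediateField.mem_extendScalars _).2 hu
      obtain ⟨c, hc⟩ := IntermediateField.mem_bot.1 hu2
      rw [← hc]
      exact c.2
    have ha0 : IntermediateField.relfinrank Kt
        (IntermediateField.adjoin k {x} ⊓ IntermediateField.adjoin k {y}) ≠ 0 := by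
      intro h; rw [h, zero_mul] at hmul; exact hdX0 hmul.symm
    have hb0 : IntermediateField.relfinrank
        (IntermediateField.adjoin k {x} ⊓ IntermediateField.adjoin k {y})
        (IntermediateField.adjoin k {x}) ≠ 0 := by
      intro h; rw [h, mul_zero] at hmul; exact hdX0 hmul.symm
    have hb1 : IntermediateField.relfinrank
        (IntermediateField.adjoin k {x} ⊓ IntermediateField.adjoin k {y})
        (IntermediateField.adjoin k {x}) = 1 := by
      by_contra hb
      have ha2 : 2 ≤ IntermediateField.relfinrank Kt
          (IntermediateField.adjoin k {x} ⊓ IntermediateField.adjoin k {y}) := by omega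
      have hb2 : 2 ≤ IntermediateField.relfinrank
          (IntermediateField.adjoin k {x} ⊓ IntermediateField.adjoin k {y})
          (IntermediateField.adjoin k {x}) := by omega
      have h4 := Nat.mul_le_mul ha2 hb2
      rw [hmul] at h4
      omega
    rw [IntermediateField.relfinrank_eq_finrank_of_le h2,
      IntermediateField.finrank_eq_one_iff] at hb1
    have hxL : x ∈ IntermediateField.adjoin k {x} ⊓ IntermediateField.adjoin k {y} := by
      have hx2 : x ∈ (⊥ : IntermediateField
          ↥(IntermediateField.adjoin k {x} ⊓ IntermediateField.adjoin k {y}) F) := hb1 ▸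
        (IntermediateField.mem_extendScalars _).2 hxm
      obtain ⟨c, hc⟩ := IntermediateField.mem_bot.1 hx2
      rw [IntermediateField.algebraMap_apply] at hc
      have hc2 := c.2
      rw [hc] at hc2
      exact hc2
    exact hxny hxL.2
  have hne_bot : IntermediateField.adjoin k {x} ⊓ IntermediateField.adjoin k {y} ≠ ⊥ := by
    rw [hL]
    intro hbot
    obtain ⟨c, hc⟩ := IntermediateField.mem_bot.1
      (IntermediateField.adjoin_simple_eq_bot_iff.1 (hKtdef ▸ hbot) : t ∈ _)
    apply htrx
    refine ⟨Polynomial.X ^ 3 + (Polynomial.C (-1 : k) * Polynomial.X ^ 2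
      + Polynomial.C c * Polynomial.X + Polynomial.C (-1 : k)), ?_, ?_⟩
    · exact (Polynomial.monic_X_pow_add (lt_of_le_of_lt Polynomial.degree_quadratic_le
        (by norm_num))).ne_zero
    · simp only [map_add, map_mul, map_pow, Polynomial.aeval_X, Polynomial.aeval_C,
        map_neg, map_one]
      rw [hc]
      linear_combination htx
  exact ⟨Stmt5Aux.p_irreducible hp, hid, hL, hne_bot⟩
end

section
/- Let k be an algebraically closed field of characteristic zero and let Z := {(a,b) ∈ k × k : a² + 3ab + b² = 0}. Consider the smallest equivalence relation ∼ on Z such that (z₁,z₂) ∼ (w₁,w₂) whenever z₁ = w₁ or z₂ = w₂. Then for every (a,b) ∈ Z with a ≠ 0, the equivalence class of (a,b) under ∼ is an infinite set. -/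
private lemma no_sol : ∀ n : ℕ, ∀ A B : ℤ, B.natAbs ≤ n → A^2 - 7*A*B + B^2 = 0 → B = 0 := by
  intro n
  induction n with
  | zero => intro A B hB _; omega
  | succ n ih =>
    intro A B hB heq
    by_cases hB0 : B = 0
    · exact hB0
    · exfalso
      have hp5 : Prime (5:ℤ) := by norm_num
      have h1 : (A + 4*B)^2 = 5 * (3*B*(A+B)) := by linear_combination heq
      have h2 : (5:ℤ) ∣ (A + 4*B) := hp5.dvd_of_dvd_pow (n := 2) ⟨3*B*(A+B), h1⟩
      obtain ⟨t, ht⟩ := h2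
      have hA : A = 5*t - 4*B := by omega
      subst hA
      have h3 : 9*B^2 = 5*(3*t*B - t^2) := by linarith [heq]
      have h4 : (5:ℤ) ∣ B := by
        have h5 : (5:ℤ) ∣ 9 * B^2 := ⟨3*t*B - t^2, h3⟩
        have h6 : (5:ℤ) ∣ B^2 := by
          rcases hp5.dvd_mul.mp h5 with h | h
          · norm_num at h
          · exact h
        exact hp5.dvd_of_dvd_pow h6
      obtain ⟨B', hB'⟩ := h4
      subst hB'
      have h25 : 25 * ((t - 4*B')^2 - 7*(t - 4*B')*B' + B'^2) = 0 := by linear_combination heq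
      have hsmall : (t - 4*B')^2 - 7*(t - 4*B')*B' + B'^2 = 0 := by linarith
      have hB'n : B'.natAbs ≤ n := by omega
      have := ih (t - 4*B') B' hB'n hsmall
      omega

private def Pseq : ℕ → ℤ × ℤ
  | 0 => (0, 1)
  | n+1 => (7 * (Pseq n).1 + (Pseq n).2, -(Pseq n).1)

private lemma Pseq_pow {k : Type*} [Field k] (c : k) (hc : c^2 = 7*c - 1) :
    ∀ n : ℕ, c^n = ((Pseq n).1 : k) * c + ((Pseq n).2 : k) := by
  intro n
  induction n with
  | zero => simp [Pseq]
  | succ n ih =>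
    have h : c^(n+1) = c^n * c := by ring
    rw [h, ih]
    simp only [Pseq]
    push_cast
    linear_combination ((Pseq n).1 : k) * hc

private lemma Pseq_pos : ∀ n : ℕ, 0 ≤ (Pseq n).1 ∧ (Pseq n).1 < (Pseq (n+1)).1 := by
  intro n
  induction n with
  | zero => simp [Pseq]
  | succ n ih =>
    obtain ⟨h0, h1⟩ := ih
    have h2 : (Pseq (n+2)) = (7 * (Pseq (n+1)).1 + (Pseq (n+1)).2, -(Pseq (n+1)).1) := rfl
    have h3 : (Pseq (n+1)).2 = -(Pseq n).1 := by simp [Pseq]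
    constructor
    · omega
    · rw [h2]; simp only; omega

private lemma pow_ne_one_aux {k : Type*} [Field k] [CharZero k] (c : k)
    (hc : c^2 = 7*c - 1) (d : ℕ) (hd : d ≠ 0) : c^d ≠ 1 := by
  intro h1
  obtain ⟨e, rfl⟩ : ∃ e, d = e + 1 := ⟨d - 1, by omega⟩
  have hpow := Pseq_pow c hc (e+1)
  rw [h1] at hpow
  set p := (Pseq (e+1)).1 with hp
  set q := (Pseq (e+1)).2 with hq
  have hppos : 0 < p := by
    have h := Pseq_pos e
    omega
  have hk : (1:k) - (q:k) = (p : k) * c := by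
    linear_combination hpow
  have hz : (((1-q)^2 - 7*(1-q)*p + p^2 : ℤ) : k) = 0 := by
    push_cast
    linear_combination ((1:k) - (q:k) + (p:k)*c - 7*(p:k)) * hk + (p:k)^2 * hc
  have hZ : ((1-q)^2 - 7*(1-q)*p + p^2 : ℤ) = 0 := by exact_mod_cast hz
  have := no_sol p.natAbs (1-q) p le_rfl hZ
  omega

theorem stmt_6 {k : Type*} [Field k] [IsAlgClosed k] [CharZero k]
    (z : {z : k × k // z.1 ^ 2 + 3 * z.1 * z.2 + z.2 ^ 2 = 0})
    (hz : z.1.1 ≠ 0) :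
    {w : {z : k × k // z.1 ^ 2 + 3 * z.1 * z.2 + z.2 ^ 2 = 0} |
      Relation.EqvGen (fun u v => u.1.1 = v.1.1 ∨ u.1.2 = v.1.2) z w}.Infinite := by
  obtain ⟨⟨a, b⟩, hab⟩ := z
  have ha : a ≠ 0 := hz
  set μ : k := b / a with hμdef
  have hb : b = a * μ := by rw [hμdef]; field_simp
  have hμ : μ^2 + 3*μ + 1 = 0 := by
    have h1 : a^2 * (μ^2 + 3*μ + 1) = 0 := by
      rw [show a^2 * (μ^2 + 3*μ + 1) = (a:k)^2 + 3*a*(a*μ) + (a*μ)^2 by ring, ← hb]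
      exact hab
    rcases mul_eq_zero.mp h1 with h | h
    · exact absurd (pow_eq_zero_iff (by norm_num)
        |>.mp h) ha
    · exact h
  have hμ0 : μ ≠ 0 := by
    intro h; rw [h] at hμ; norm_num at hμ
  have hw : ∀ n : ℕ, (a * μ^(2*n))^2 + 3*(a*μ^(2*n))*(a*μ^(2*n+1)) + (a*μ^(2*n+1))^2 = 0 := by
    intro n
    linear_combination (a^2 * (μ^n)^4) * hμ
  have hv : ∀ n : ℕ, (a * μ^(2*n+2))^2 + 3*(a*μ^(2*n+2))*(a*μ^(2*n+1)) + (a*μ^(2*n+1))^2 = 0 := by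
    intro n
    linear_combination (a^2 * μ^2 * (μ^n)^4) * hμ
  set Rel : {z : k × k // z.1 ^ 2 + 3 * z.1 * z.2 + z.2 ^ 2 = 0} →
      {z : k × k // z.1 ^ 2 + 3 * z.1 * z.2 + z.2 ^ 2 = 0} → Prop :=
    fun u v => u.1.1 = v.1.1 ∨ u.1.2 = v.1.2 with hRel
  set w : ℕ → {z : k × k // z.1 ^ 2 + 3 * z.1 * z.2 + z.2 ^ 2 = 0} :=
    fun n => ⟨(a * μ^(2*n), a * μ^(2*n+1)), hw n⟩ with hwdef
  have hchain : ∀ n : ℕ, Relation.EqvGen Rel (w n) (w (n+1)) := by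
    intro n
    refine Relation.EqvGen.trans _ ⟨(a * μ^(2*n+2), a * μ^(2*n+1)), hv n⟩ _
      (Relation.EqvGen.rel _ _ (Or.inr rfl))
      (Relation.EqvGen.rel _ _ (Or.inl ?_))
    show a * μ^(2*n+2) = a * μ^(2*(n+1))
    ring
  have hw0 : (⟨(a, b), hab⟩ : {z : k × k // z.1 ^ 2 + 3 * z.1 * z.2 + z.2 ^ 2 = 0}) = w 0 := by
    apply Subtype.ext
    show (a, b) = (a * μ^(2*0), a * μ^(2*0+1))
    rw [Prod.ext_iff]
    constructor
    · simp
    · simp [hb]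
  have hmem : ∀ n : ℕ, Relation.EqvGen Rel ⟨(a, b), hab⟩ (w n) := by
    intro n
    induction n with
    | zero => rw [hw0]; exact Relation.EqvGen.refl _
    | succ n ih => exact Relation.EqvGen.trans _ _ _ ih (hchain n)
  have hcsq : (μ^2)^2 = 7*(μ^2) - 1 := by linear_combination (μ^2 - 3*μ + 1) * hμ
  have hkey : ∀ m n : ℕ, m < n → μ^(2*m) ≠ μ^(2*n) := by
    intro m n hmn he
    have hd : n - m ≠ 0 := by omega
    have hnm : 2*n = 2*m + 2*(n - m) := by omega
    have hμ2 : μ^(2*m) ≠ 0 := pow_ne_zero _ hμ0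
    have h' : μ^(2*m) * 1 = μ^(2*m) * μ^(2*(n-m)) := by
      rw [mul_one, ← pow_add, ← hnm]; exact he
    have h1 : (1:k) = μ^(2*(n-m)) := mul_left_cancel₀ hμ2 h'
    have h2 : (μ^2)^(n-m) = 1 := by rw [← pow_mul]; exact h1.symm
    exact pow_ne_one_aux (μ^2) hcsq (n-m) hd h2
  have hwinj : Function.Injective w := by
    intro m n hmn
    by_contra hne
    have h1 : a * μ^(2*m) = a * μ^(2*n) := congrArg (fun x => x.1.1) hmn
    have h2 : μ^(2*m) = μ^(2*n) := mul_left_cancel₀ ha h1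
    rcases Nat.lt_or_ge m n with h | h
    · exact hkey m n h h2
    · exact hkey n m (by omega) h2.symm
  exact Set.infinite_of_injective_forall_mem hwinj hmem
end

section
/- Let k be a field of characteristic zero. For all nonzero a, b ∈ k and all integers n ≥ 1, the polynomial X² + 3XY + Y² does not divide aXⁿ − bYⁿ in k[X,Y]. -/
open MvPolynomial

private def Lseq : ℕ → ℤ
  | 0 => 2
  | 1 => -3
  | (m+2) => -3 * Lseq (m+1) - Lseq m

private lemma Lseq_sq (m : ℕ) :
    9 ≤ (Lseq (m+1))^2 ∧ (Lseq (m+1)) * (Lseq (m+2)) ≤ -9 ∧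
      (Lseq (m+1))^2 ≤ (Lseq (m+2))^2 := by
  induction m with
  | zero => norm_num [Lseq]
  | succ m ih =>
    obtain ⟨h2, h1, h3⟩ := ih
    have hz : Lseq (m+3) = -3 * Lseq (m+2) - Lseq (m+1) := rfl
    refine ⟨by nlinarith, ?_, ?_⟩ <;> rw [hz] <;>
      nlinarith [sq_nonneg (Lseq (m+1)), sq_nonneg (Lseq (m+2))]

theorem stmt_7 {k : Type*} [Field k] [CharZero k]
    (a b : k) (ha : a ≠ 0) (hb : b ≠ 0) (n : ℕ) (hn : 1 ≤ n) :
    ¬ (X 0 ^ 2 + 3 * X 0 * X 1 + X 1 ^ 2 ∣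
        (C a * X 0 ^ n - C b * X 1 ^ n : MvPolynomial (Fin 2) k)) := by
  intro h
  set K := AlgebraicClosure k
  have hch : CharZero K := charZero_of_injective_algebraMap (algebraMap k K).injective
  obtain ⟨α, hα⟩ := IsAlgClosed.exists_root
    (k := K) (Polynomial.X ^ 2 + Polynomial.C 3 * Polynomial.X + 1) (by
      have : (Polynomial.X ^ 2 + Polynomial.C 3 * Polynomial.X + 1 : Polynomial K).degree = 2 := by
        compute_degree!
      simp [this])
  have hroot : α ^ 2 + 3 * α + 1 = 0 := by
    have := hα
    simp [Polynomial.IsRoot, Polynomial.eval_add, Polynomial.eval_pow] at this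
    linear_combination this
  have h1 := map_dvd (aeval (R := k) (S₁ := K) ![α, 1]) h
  have h2 := map_dvd (aeval (R := k) (S₁ := K) ![1, α]) h
  simp only [map_add, map_mul, map_pow, map_sub, aeval_X, aeval_C, map_ofNat,
    Matrix.cons_val_zero, Matrix.cons_val_one, Matrix.head_cons] at h1 h2
  rw [show (α ^ 2 + 3 * α * 1 + 1 ^ 2 : K) = 0 by linear_combination hroot,
    zero_dvd_iff] at h1
  rw [show ((1:K) ^ 2 + 3 * 1 * α + α ^ 2 : K) = 0 by linear_combination hroot,
    zero_dvd_iff] at h2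
  have ha' : algebraMap k K a ≠ 0 := by
    simpa using (map_ne_zero (algebraMap k K)).mpr ha
  have hb' : algebraMap k K b ≠ 0 := by
    simpa using (map_ne_zero (algebraMap k K)).mpr hb
  -- from h1 : a α^n - b = 0, h2 : a - b α^n = 0
  have e1 : algebraMap k K a * α ^ n = algebraMap k K b := by linear_combination h1
  have e2 : algebraMap k K a = algebraMap k K b * α ^ n := by linear_combination h2
  have hαn : α ^ (2 * n) = 1 := by
    have : algebraMap k K b * α ^ (2 * n) = algebraMap k K b := by
      rw [two_mul, pow_add]
      linear_combination e1 - α ^ n * e2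
    have := mul_left_cancel₀ hb' (this.trans (mul_one _).symm)
    simpa using this
  -- key identity : L m * α^m = α^(2m) + 1
  have key : ∀ m : ℕ, ((Lseq m : K) * α ^ m = α ^ (2 * m) + 1) ∧
      ((Lseq (m + 1) : K) * α ^ (m + 1) = α ^ (2 * (m + 1)) + 1) := by
    intro m
    induction m with
    | zero =>
      constructor
      · norm_num [Lseq]
      · show ((Lseq 1 : K)) * α ^ 1 = α ^ 2 + 1
        have : (Lseq 1 : ℤ) = -3 := rfl
        rw [this]
        push_cast
        linear_combination -hroot
    | succ m ih =>
      obtain ⟨e0, e1⟩ := ih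
      refine ⟨e1, ?_⟩
      have hz : Lseq (m + 2) = -3 * Lseq (m + 1) - Lseq m := rfl
      rw [hz]
      push_cast
      ring_nf
      ring_nf at e0 e1
      simp only [K] at e0 e1 hroot ⊢
      push_cast
      linear_combination (-3 * α) * e1 - α ^ 2 * e0 + (-(α ^ (2 * m + 2)) - 1) * hroot
  have hL : (Lseq n : K) * α ^ n = 2 := by
    rw [(key n).1, hαn]; norm_num
  have hL2 : ((Lseq n) ^ 2 : K) = 4 := by
    have : ((Lseq n : K) * α ^ n) ^ 2 = 4 := by rw [hL]; norm_num
    rw [mul_pow, ← pow_mul, mul_comm n 2, hαn] at this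
    simpa using this
  have hZ : (Lseq n) ^ 2 = 4 := by
    exact_mod_cast hL2
  obtain ⟨m, rfl⟩ := Nat.exists_eq_add_of_le hn
  have h9 := (Lseq_sq m).1
  rw [Nat.add_comm 1 m] at hZ
  omega
end
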